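/- arXiv:2512.05504 — 7 statements merged into one kernel-verified Lean document; each statement's English description precedes it below -/
import Mathlib

section
/- Let M be a compact connected metric space equipped with a continuous flow φ. Then φ admits a null-class level-set cross-section if and only if φ is not chain recurrent. (This is the paper's existence theorem in the case of vanishing cohomology class: a null-cohomologous partial cross-section exists iff φ is not chain recurrent.) -/
/-- An `ε`-chain for the flow `ψ`, with respect to the distance function `d`:
a finite sequence of `n ≥ 1` steps with jump times `τ i ≥ 1`, where each jump
`d (ψ (τ i) (p i)) (p (i+1))` has size `< ε`. -/
def IsChainWith {X : Type*} (ψ : ℝ → X → X) (d : X → X → ℝ) (ε : ℝ) (y z : X) : Prop :=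
  ∃ (n : ℕ) (p : ℕ → X) (τ : ℕ → ℝ),
    1 ≤ n ∧ p 0 = y ∧ p n = z ∧ (∀ i < n, 1 ≤ τ i) ∧
    ∀ i < n, d (ψ (τ i) (p i)) (p (i + 1)) < ε

/-- A point is chain recurrent if for every `ε > 0` there is an `ε`-chain from the
point back to itself. -/
def ChainRecPt {M : Type*} [MetricSpace M] (φ : ℝ → M → M) (x : M) : Prop :=
  ∀ ε : ℝ, 0 < ε → IsChainWith φ dist ε x x

/-- `g` is strictly increasing along the flow `φ` on the set `U`: whenever an orbit
segment stays in `U`, the value of `g` strictly increases along it. -/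
def FlowStrictIncrOn {M : Type*} (φ : ℝ → M → M) (g : M → ℝ) (U : Set M) : Prop :=
  ∀ (x : M) (s s' : ℝ), s < s' → (∀ u ∈ Set.Icc s s', φ u x ∈ U) →
    g (φ s x) < g (φ s' x)

/-- A null-class level-set cross-section of the flow `φ`: a nonempty level set
`g⁻¹ {c}` of a continuous real function which is strictly increasing along the flow
on an open set containing the level set. -/
def IsNullLevelSetCS {M : Type*} [TopologicalSpace M] (φ : ℝ → M → M) (S : Set M) : Prop :=
  S.Nonempty ∧ ∃ (g : M → ℝ) (c : ℝ) (U : Set M),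
    Continuous g ∧ S = g ⁻¹' {c} ∧ IsOpen U ∧ S ⊆ U ∧ FlowStrictIncrOn φ g U

/-!
If `g⁻¹{c}` is a cross-section, the superlevel set `{c ≤ g}` is forward invariant, and from
time `1` on the flow keeps it above `c + δ` for a uniform `δ > 0`; an `ε`-chain, with `ε` small
for the uniform continuity of `g`, can therefore never come back to the level `c`.

Conversely, if `x` has no `ε`-chain back to itself, the set `P` of points reached from `x` by
`ε`-chains is open, misses `x`, and `ϕ s (closure P) ⊆ P` for `s ≥ 1`. Its ω-limit set `A ⊆ P` is
an attractor, and its dual repeller `B` (the points whose forward orbit misses `P`) is nonempty.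
The infimum along forward orbits of an Urysohn function equal to `1` exactly on `A`, averaged over
a dense set of times, is a continuous `g` with `g = 2` on `A`, `g = 0` on `B`, strictly increasing
along orbits off `A ∪ B`; by connectedness its level set `g⁻¹{1}` is nonempty.
-/

open Set Filter Topology omegaLimit
open scoped NNReal

section Chains

variable {X : Type*} {ψ : ℝ → X → X} {d : X → X → ℝ} {ε s : ℝ} {x y z : X}

lemma isChainWith_of_lt (hs : 1 ≤ s) (h : d (ψ s x) y < ε) : IsChainWith ψ d ε x y :=
  ⟨1, fun i => if i = 0 then x else y, fun _ => s, le_rfl, rfl, rfl, fun _ _ => hs,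
    fun i hi => by
      obtain rfl : i = 0 := by omega
      simpa using h⟩

lemma IsChainWith.snoc (h : IsChainWith ψ d ε x y) (hs : 1 ≤ s) (hz : d (ψ s y) z < ε) :
    IsChainWith ψ d ε x z := by
  obtain ⟨n, p, τ, hn, hp0, hpn, hτ, hd⟩ := h
  refine ⟨n + 1, Function.update p (n + 1) z, Function.update τ n s, by omega, ?_, by simp, ?_, ?_⟩
  · simpa [Function.update_apply] using hp0
  · intro i hi
    rcases eq_or_ne i n with rfl | hin
    · simpa using hs
    · simpa [hin] using hτ i (by omega)
  · intro i hi
    rcases eq_or_ne i n with rfl | hin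
    · simpa [hpn] using hz
    · simpa [Function.update_apply, hin, show i ≠ n + 1 by omega] using hd i (by omega)

lemma isChainWith_iff_exists_last :
    IsChainWith ψ d ε x z ↔
      ∃ y, (y = x ∨ IsChainWith ψ d ε x y) ∧ ∃ s, 1 ≤ s ∧ d (ψ s y) z < ε := by
  constructor
  · rintro ⟨n, p, τ, hn, hp0, hpn, hτ, hd⟩
    have hlast := hd (n - 1) (by omega)
    rw [Nat.sub_add_cancel hn, hpn] at hlast
    refine ⟨p (n - 1), ?_, τ (n - 1), hτ _ (by omega), hlast⟩
    rcases hn.eq_or_lt with rfl | hn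
    · exact .inl hp0
    · exact .inr ⟨n - 1, p, τ, by omega, hp0, rfl, fun i hi => hτ i (by omega),
        fun i hi => hd i (by omega)⟩
  · rintro ⟨y, rfl | hy, s, hs, hz⟩
    · exact isChainWith_of_lt hs hz
    · exact hy.snoc hs hz

lemma IsChainWith.mem_of_forall_jump {K L : Set X} (hLK : L ⊆ K)
    (hjump : ∀ y ∈ K, ∀ s, 1 ≤ s → ∀ z, d (ψ s y) z < ε → z ∈ L) (hx : x ∈ K)
    (h : IsChainWith ψ d ε x z) : z ∈ L := by
  obtain ⟨n, p, τ, hn, hp0, hpn, hτ, hd⟩ := h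
  have key : ∀ i < n, p (i + 1) ∈ L := by
    intro i
    induction i with
    | zero => exact fun h0 => hjump _ (hp0 ▸ hx) _ (hτ 0 h0) _ (hd 0 h0)
    | succ i ih => exact fun hi => hjump _ (hLK (ih (by omega))) _ (hτ _ hi) _ (hd _ hi)
  simpa [Nat.sub_add_cancel hn, hpn] using key (n - 1) (by omega)

lemma isOpen_setOf_isChainWith [PseudoMetricSpace X] (ψ : ℝ → X → X) (ε : ℝ) (x : X) :
    IsOpen {z | IsChainWith ψ dist ε x z} := by
  have : {z | IsChainWith ψ dist ε x z} =
      ⋃ (y) (_ : y = x ∨ IsChainWith ψ dist ε x y) (s) (_ : 1 ≤ s), Metric.ball (ψ s y) ε := by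
    ext z
    rw [mem_ofPred_eq, isChainWith_iff_exists_last]
    simp [dist_comm z]
  rw [this]
  exact isOpen_biUnion fun _ _ => isOpen_biUnion fun _ _ => Metric.isOpen_ball

end Chains

section FlowStrictIncrOn

variable {M : Type*} [TopologicalSpace M] {ϕ : Flow ℝ M} {g : M → ℝ} {c : ℝ} {U : Set M}
  {x : M} {u t : ℝ}

lemma FlowStrictIncrOn.eventually_nhdsGT (h : FlowStrictIncrOn ϕ g U) (hU : IsOpen U)
    (hx : ϕ u x ∈ U) : ∀ᶠ v in 𝓝[>] u, g (ϕ u x) < g (ϕ v x) := by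
  obtain ⟨δ, hδ, hball⟩ := Metric.eventually_nhds_iff.1 <|
    (ϕ.continuous continuous_id continuous_const).continuousAt.preimage_mem_nhds (hU.mem_nhds hx)
  filter_upwards [Ioo_mem_nhdsGT (show u < u + δ by linarith)] with v hv
  refine h x u v hv.1 fun w hw => hball ?_
  rw [Real.dist_eq, abs_lt]
  constructor <;> linarith [hw.1, hw.2, hv.2]

lemma FlowStrictIncrOn.eventually_nhdsLT (h : FlowStrictIncrOn ϕ g U) (hU : IsOpen U)
    (hx : ϕ u x ∈ U) : ∀ᶠ v in 𝓝[<] u, g (ϕ v x) < g (ϕ u x) := by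
  obtain ⟨δ, hδ, hball⟩ := Metric.eventually_nhds_iff.1 <|
    (ϕ.continuous continuous_id continuous_const).continuousAt.preimage_mem_nhds (hU.mem_nhds hx)
  filter_upwards [Ioo_mem_nhdsLT (show u - δ < u by linarith)] with v hv
  refine h x v u hv.2 fun w hw => hball ?_
  rw [Real.dist_eq, abs_lt]
  constructor <;> linarith [hw.1, hw.2, hv.1]

variable (hg : Continuous g) (hU : IsOpen U) (hSU : g ⁻¹' {c} ⊆ U)
  (hincr : FlowStrictIncrOn ϕ g U)
include hg hU hSU hincr

/-- The level `c` can only be crossed upwards. -/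
lemma FlowStrictIncrOn.le_apply_flow_of_le (hx : c ≤ g x) (ht : 0 ≤ t) : c ≤ g (ϕ t x) := by
  have horbit : Continuous fun v => g (ϕ v x) :=
    hg.comp (ϕ.continuous continuous_id continuous_const)
  refine IsClosed.Icc_subset_of_forall_mem_nhdsWithin (s := {v | c ≤ g (ϕ v x)})
    ((isClosed_le continuous_const horbit).inter isClosed_Icc)
    (by simpa [ϕ.map_zero_apply] using hx)
    (fun v hv => ?_) ⟨ht, le_rfl⟩
  rcases (show c ≤ g (ϕ v x) from hv.1).lt_or_eq with hlt | heq
  · exact mem_nhdsWithin_of_mem_nhds <| mem_of_superset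
      ((isOpen_lt continuous_const horbit).mem_nhds hlt) fun _ hw => le_of_lt (α := ℝ) hw
  · filter_upwards [hincr.eventually_nhdsGT hU (hSU heq.symm)] with w hw
    exact heq.le.trans hw.le

lemma FlowStrictIncrOn.lt_apply_flow_of_le (hx : c ≤ g x) (ht : 0 < t) : c < g (ϕ t x) := by
  refine (hincr.le_apply_flow_of_le hg hU hSU hx ht.le).lt_of_ne fun heq => ?_
  obtain ⟨v, hv, hv0⟩ := ((hincr.eventually_nhdsLT hU (hSU heq.symm)).and
    (Ioo_mem_nhdsLT ht)).exists
  exact (heq ▸ hv).not_ge (hincr.le_apply_flow_of_le hg hU hSU hx hv0.1.le)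

end FlowStrictIncrOn

namespace Flow

theorem not_chainRecPt_of_flowStrictIncrOn {M : Type*} [MetricSpace M] [CompactSpace M]
    {ϕ : Flow ℝ M} {g : M → ℝ} {c : ℝ} {U : Set M} {x : M} (hg : Continuous g) (hU : IsOpen U)
    (hSU : g ⁻¹' {c} ⊆ U) (hincr : FlowStrictIncrOn ϕ g U) (hx : g x = c) :
    ¬ ChainRecPt ϕ x := by
  intro hrec
  obtain ⟨m, hmK, hmin⟩ := (isClosed_le continuous_const hg).isCompact.exists_isMinOn ⟨x, hx.ge⟩
    (f := fun y => g (ϕ 1 y)) (hg.comp (ϕ.continuous continuous_const continuous_id)).continuousOn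
  have hδ : 0 < g (ϕ 1 m) - c := sub_pos.2 (hincr.lt_apply_flow_of_le hg hU hSU hmK one_pos)
  have hgain : ∀ y, c ≤ g y → ∀ s, 1 ≤ s → g (ϕ 1 m) ≤ g (ϕ s y) := by
    intro y hy s hs
    simpa [← ϕ.map_add] using hmin (hincr.le_apply_flow_of_le hg hU hSU hy (sub_nonneg.2 hs))
  obtain ⟨ε, hε, hgε⟩ := Metric.uniformContinuous_iff.1
    (CompactSpace.uniformContinuous_of_continuous hg) _ hδ
  have hjump : ∀ y, c ≤ g y → ∀ s, 1 ≤ s → ∀ z, dist (ϕ s y) z < ε → c < g z := by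
    intro y hy s hs z hz
    have := abs_lt.1 (Real.dist_eq _ _ ▸ hgε hz)
    linarith [hgain y hy s hs]
  have hxx : c < g x := (hrec ε hε).mem_of_forall_jump (K := {y | c ≤ g y}) (L := {y | c < g y})
    (fun _ hy => le_of_lt (α := ℝ) hy) hjump hx.ge
  exact hxx.ne' hx

lemma mapsTo_closure_setOf_isChainWith {M : Type*} [MetricSpace M] (ϕ : Flow ℝ M) (x : M) {ε s : ℝ}
    (hε : 0 < ε) (hs : 1 ≤ s) :
    MapsTo (ϕ s) (closure {y | IsChainWith ϕ dist ε x y}) {y | IsChainWith ϕ dist ε x y} := by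
  intro y hy
  have hnhds : {w | dist (ϕ s w) (ϕ s y) < ε} ∈ 𝓝 y :=
    (isOpen_lt ((ϕ.continuous_toFun s).dist continuous_const) continuous_const).mem_nhds
      (by simpa using hε)
  obtain ⟨w, hw, hwP⟩ := mem_closure_iff_nhds.1 hy _ hnhds
  exact hwP.snoc hs hw

section ForwardInf

variable {M : Type*} [TopologicalSpace M] (ϕ : Flow ℝ M) (f : M → ℝ)

noncomputable def forwardInf (y : M) : ℝ := ⨅ t : ℝ≥0, f (ϕ t y)

variable {ϕ f} {y : M} {b : ℝ}

lemma forwardInf_le (hf : BddBelow (range f)) (y : M) (t : ℝ≥0) :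
    forwardInf ϕ f y ≤ f (ϕ t y) :=
  ciInf_le (hf.mono (range_subset_iff.2 fun _ => mem_range_self _)) t

lemma le_forwardInf (h : ∀ t : ℝ≥0, b ≤ f (ϕ t y)) : b ≤ forwardInf ϕ f y := le_ciInf h

lemma forwardInf_le_self (hf : BddBelow (range f)) (y : M) : forwardInf ϕ f y ≤ f y := by
  simpa [ϕ.map_zero_apply] using forwardInf_le hf y 0

lemma forwardInf_le_forwardInf_flow (hf : BddBelow (range f)) (y : M) {d : ℝ} (hd : 0 ≤ d) :
    forwardInf ϕ f y ≤ forwardInf ϕ f (ϕ d y) :=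
  le_forwardInf fun t => by
    rw [← ϕ.map_add]
    exact forwardInf_le hf y ⟨t + d, by positivity⟩

lemma upperSemicontinuous_forwardInf (hf : Continuous f) (hbdd : BddBelow (range f)) :
    UpperSemicontinuous (forwardInf ϕ f) :=
  upperSemicontinuous_ciInf (fun _ => hbdd.mono (range_subset_iff.2 fun _ => mem_range_self _))
    fun _ => (hf.comp (ϕ.continuous_toFun _)).upperSemicontinuous

/-- On `[0, T]` the infimum is controlled by compactness, so only the tail of the orbit needs
a hypothesis. -/
lemma lowerSemicontinuousAt_forwardInf (hf : Continuous f) (hbdd : BddBelow (range f))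
    (h : ∀ b < forwardInf ϕ f y, ∃ T, ∀ᶠ z in 𝓝 y, ∀ t, T ≤ t → b < f (ϕ t z)) :
    LowerSemicontinuousAt (forwardInf ϕ f) y := by
  intro b hb
  obtain ⟨b', hbb', hb'⟩ := exists_between hb
  obtain ⟨T, hT⟩ := h b' hb'
  have hcont : Continuous fun p : M × ℝ => f (ϕ p.2 p.1) :=
    hf.comp (ϕ.continuous continuous_snd continuous_fst)
  have hK : ∀ᶠ z in 𝓝 y, ∀ t ∈ Icc 0 T, b' < f (ϕ t z) :=
    isCompact_Icc.eventually_forall_of_forall_eventually fun t ht =>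
      (isOpen_lt continuous_const hcont).mem_nhds (hb'.trans_le (forwardInf_le hbdd y ⟨t, ht.1⟩))
  filter_upwards [hK, hT] with z hzK hzT
  refine hbb'.trans_le (le_forwardInf fun t => ?_)
  rcases le_total (t : ℝ) T with htT | hTt
  · exact (hzK t ⟨t.2, htT⟩).le
  · exact (hzT t hTt).le

end ForwardInf

lemma map_comm {M : Type*} [TopologicalSpace M] (ϕ : Flow ℝ M) (a b : ℝ) (y : M) :
    ϕ a (ϕ b y) = ϕ b (ϕ a y) := by
  rw [← ϕ.map_add, add_comm, ϕ.map_add]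

section Averaging

variable {M : Type*} [TopologicalSpace M] {ϕ : Flow ℝ M} {k : M → ℝ}

lemma exists_lt_apply_flow_of_lt (hmono : ∀ y d, 0 ≤ d → k y ≤ k (ϕ d y)) {y : M} {d r : ℝ}
    (hd : 0 < d) (h : k y < k (ϕ r y)) :
    ∃ u : ℝ≥0, k (ϕ u y) < k (ϕ d (ϕ u y)) := by
  by_contra! hflat
  have hiter : ∀ n : ℕ, k (ϕ (n * d) y) ≤ k y := by
    intro n
    induction n with
    | zero => simp [ϕ.map_zero_apply]
    | succ n ih =>
      calc k (ϕ ((n + 1 : ℕ) * d) y) = k (ϕ d (ϕ (n * d) y)) := by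
            rw [← ϕ.map_add]; push_cast; ring_nf
        _ ≤ k (ϕ (n * d) y) := hflat ⟨n * d, by positivity⟩
        _ ≤ k y := ih
  obtain ⟨n, hn⟩ := exists_nat_ge (r / d)
  have hrn : r ≤ n * d := (div_le_iff₀ hd).1 hn
  have := hmono (ϕ r y) (n * d - r) (sub_nonneg.2 hrn)
  rw [← ϕ.map_add, sub_add_cancel] at this
  linarith [hiter n]

theorem exists_strictMono_average (hk : Continuous k) (hk01 : ∀ y, 0 ≤ k y ∧ k y ≤ 1)
    (hmono : ∀ y d, 0 ≤ d → k y ≤ k (ϕ d y)) :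
    ∃ g : M → ℝ, Continuous g ∧ (∀ y, (∀ t, 0 ≤ t → k (ϕ t y) = k y) → g y = 2 * k y) ∧
      ∀ y d, 0 < d → (∃ r, k y < k (ϕ r y)) → g y < g (ϕ d y) := by
  obtain ⟨u, hu⟩ := TopologicalSpace.exists_dense_seq ℝ≥0
  set w : ℕ → M → ℝ := fun n y => (1 / 2 : ℝ) ^ n * k (ϕ (u n) y)
  have hw : ∀ n y, ‖w n y‖ ≤ (1 / 2 : ℝ) ^ n := fun n y => by
    rw [Real.norm_of_nonneg (mul_nonneg (by positivity) (hk01 _).1)]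
    exact mul_le_of_le_one_right (by positivity) (hk01 _).2
  have hsum : ∀ y, Summable (w · y) := fun y =>
    Summable.of_norm_bounded summable_geometric_two (hw · y)
  refine ⟨fun y => ∑' n, w n y,
    continuous_tsum (fun n => continuous_const.mul (hk.comp (ϕ.continuous_toFun _)))
      summable_geometric_two hw, fun y hy => ?_, fun y d hd ⟨r, hkr⟩ => ?_⟩
  · show ∑' n, (1 / 2 : ℝ) ^ n * k (ϕ (u n) y) = 2 * k y
    rw [tsum_congr (g := fun n => (1 / 2 : ℝ) ^ n * k y) fun n => by rw [hy _ (u n).coe_nonneg],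
      tsum_mul_right, tsum_geometric_two]
  · obtain ⟨t, ht⟩ := exists_lt_apply_flow_of_lt hmono hd hkr
    have hopen : IsOpen {t : ℝ≥0 | k (ϕ t y) < k (ϕ d (ϕ t y))} :=
      isOpen_lt (hk.comp (ϕ.continuous NNReal.continuous_coe continuous_const))
        (hk.comp ((ϕ.continuous_toFun d).comp
          (ϕ.continuous NNReal.continuous_coe continuous_const)))
    obtain ⟨n, hn⟩ := hu.exists_mem_open hopen ⟨t, ht⟩
    refine Summable.tsum_lt_tsum (i := n) (fun m => ?_) ?_ (hsum y) (hsum _)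
    · simp only [w, map_comm ϕ (u m) d]
      exact mul_le_mul_of_nonneg_left (hmono _ d hd.le) (by positivity)
    · simp only [w, map_comm ϕ (u n) d]
      exact mul_lt_mul_of_pos_left hn (by positivity)

end Averaging

section AttractorRepeller

variable {M : Type*} [TopologicalSpace M] (ϕ : Flow ℝ M) (P : Set M)

lemma isInvariant_omegaLimit_atTop : IsInvariant ϕ (ω atTop ϕ P) :=
  ϕ.isInvariant_omegaLimit atTop P fun t => tendsto_atTop_add_const_left _ t tendsto_id

def dualRepeller : Set M := {y | ∀ t, 0 ≤ t → ϕ t y ∉ P}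

variable {ϕ P}

lemma isClosed_dualRepeller (hPo : IsOpen P) : IsClosed (dualRepeller ϕ P) := by
  have : dualRepeller ϕ P = ⋂ t ∈ Ici (0 : ℝ), ϕ t ⁻¹' Pᶜ := by
    ext y
    simp [dualRepeller]
  rw [this]
  exact isClosed_biInter fun t _ => hPo.isClosed_compl.preimage (ϕ.continuous_toFun t)

lemma mapsTo_dualRepeller {t : ℝ} (ht : 0 ≤ t) :
    MapsTo (ϕ t) (dualRepeller ϕ P) (dualRepeller ϕ P) := fun y hy s hs => by
  rw [← ϕ.map_add]
  exact hy _ (add_nonneg hs ht)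

lemma disjoint_dualRepeller : Disjoint P (dualRepeller ϕ P) :=
  disjoint_left.2 fun y hy hB => hB 0 le_rfl (by simpa [ϕ.map_zero_apply] using hy)

lemma exists_eventually_flow_mem [CompactSpace M] (hPo : IsOpen P) {O : Set M} (hO : IsOpen O)
    (hAO : ω atTop ϕ P ⊆ O) {y : M} (hy : y ∉ dualRepeller ϕ P) :
    ∃ T, ∀ᶠ z in 𝓝 y, ∀ t, T ≤ t → ϕ t z ∈ O := by
  obtain ⟨t₀, ht₀, hyP⟩ : ∃ t₀, 0 ≤ t₀ ∧ ϕ t₀ y ∈ P := by simpa [dualRepeller] using hy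
  obtain ⟨T, hT⟩ :=
    eventually_atTop.1 (eventually_mapsTo_of_isOpen_of_omegaLimit_subset atTop ϕ P hO hAO)
  refine ⟨T + t₀, ?_⟩
  filter_upwards [(ϕ.continuous_toFun t₀).continuousAt.preimage_mem_nhds (hPo.mem_nhds hyP)]
    with z hz t ht
  rw [show t = (t - t₀) + t₀ by ring, ϕ.map_add]
  exact hT _ (by linarith) hz

variable (hP : ∀ s, 1 ≤ s → MapsTo (ϕ s) (closure P) P)
include hP

lemma omegaLimit_atTop_subset : ω atTop ϕ P ⊆ P := by
  have hcl : ω atTop ϕ P ⊆ closure P :=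
    (omegaLimit_subset_closure_image2 _ _ _ (Ici_mem_atTop 1)).trans
      (closure_mono (image2_subset_iff.2 fun s hs y hy => hP s hs (subset_closure hy)))
  intro a ha
  have := hP 1 le_rfl (hcl (isInvariant_omegaLimit_atTop ϕ P (-1) ha))
  rwa [← ϕ.map_add, add_neg_cancel, ϕ.map_zero_apply] at this

/-- If every forward orbit entered `P`, then by compactness some `ϕ n` would map everything into
`P`; but `ϕ n` is onto. -/
lemma nonempty_dualRepeller [CompactSpace M] (hPo : IsOpen P) (hPu : P ≠ univ) :
    (dualRepeller ϕ P).Nonempty := by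
  by_contra! hB
  have hmono : Monotone fun n : ℕ => ϕ n ⁻¹' P := monotone_nat_of_le_succ fun n y hy => by
    simp only [mem_preimage, Nat.cast_succ]
    rw [add_comm, ϕ.map_add]
    exact hP 1 le_rfl (subset_closure hy)
  have hcover : univ ⊆ ⋃ n : ℕ, ϕ n ⁻¹' P := by
    intro y _
    obtain ⟨t, ht, hty⟩ : ∃ t, 0 ≤ t ∧ ϕ t y ∈ P := by
      simpa [dualRepeller] using (hB ▸ notMem_empty y : y ∉ dualRepeller ϕ P)
    obtain ⟨n, hn⟩ := exists_nat_ge (t + 1)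
    refine mem_iUnion.2 ⟨n, ?_⟩
    rw [mem_preimage, show (n : ℝ) = (n - t) + t by ring, ϕ.map_add]
    exact hP _ (by linarith) (subset_closure hty)
  obtain ⟨n, hn⟩ := isCompact_univ.elim_directed_cover _
    (fun n => hPo.preimage (ϕ.continuous_toFun _)) hcover hmono.directed_le
  refine hPu (eq_univ_of_forall fun x => ?_)
  simpa [← ϕ.map_add, ϕ.map_zero_apply] using hn (mem_univ (ϕ (-n) x))

end AttractorRepeller

section Lyapunov

variable {M : Type*} [TopologicalSpace M] [CompactSpace M] [PerfectlyNormalSpace M]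
  {ϕ : Flow ℝ M} {P : Set M}

theorem exists_monotone_lyapunov (hPo : IsOpen P)
    (hP : ∀ s, 1 ≤ s → MapsTo (ϕ s) (closure P) P) :
    ∃ k : M → ℝ, Continuous k ∧ (∀ y, 0 ≤ k y ∧ k y ≤ 1) ∧ (∀ y d, 0 ≤ d → k y ≤ k (ϕ d y)) ∧
      (∀ a ∈ ω atTop ϕ P, k a = 1) ∧ (∀ b ∈ dualRepeller ϕ P, k b = 0) ∧
      ∀ y ∉ ω atTop ϕ P ∪ dualRepeller ϕ P, ∃ r, k y < k (ϕ r y) := by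
  have hA : IsClosed (ω atTop ϕ P) := isClosed_omegaLimit _ _ _
  obtain ⟨f, hAf, hfB, -, hf01⟩ := exists_continuous_one_zero_of_isCompact_of_isGδ hA.isCompact
    hA.isGδ (isClosed_dualRepeller hPo)
    (disjoint_dualRepeller.mono_left (omegaLimit_atTop_subset hP))
  have hfA : ∀ a ∈ ω atTop ϕ P, f a = 1 := fun a ha => by rw [hAf] at ha; exact ha
  have hbdd : BddBelow (range f) := ⟨0, forall_mem_range.2 fun y => (hf01 y).1⟩
  have hk01 : ∀ y, 0 ≤ forwardInf ϕ f y ∧ forwardInf ϕ f y ≤ 1 := fun y =>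
    ⟨le_forwardInf fun _ => (hf01 _).1, (forwardInf_le_self hbdd y).trans (hf01 y).2⟩
  have hkB : ∀ b ∈ dualRepeller ϕ P, forwardInf ϕ f b = 0 := fun b hb =>
    le_antisymm ((forwardInf_le_self hbdd b).trans_eq (hfB hb)) (hk01 b).1
  have htail : ∀ y ∉ dualRepeller ϕ P, ∀ b < 1, ∃ T, ∀ᶠ z in 𝓝 y, ∀ t, T ≤ t → b < f (ϕ t z) :=
    fun y hy b hb => exists_eventually_flow_mem hPo (isOpen_lt continuous_const f.continuous)
      (fun a ha => by simpa [hfA a ha] using hb) hy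
  refine ⟨forwardInf ϕ f, continuous_iff_continuousAt.2 fun y =>
      continuousAt_iff_lower_upperSemicontinuousAt.2
        ⟨lowerSemicontinuousAt_forwardInf f.continuous hbdd fun b hb => ?_,
          upperSemicontinuous_forwardInf f.continuous hbdd y⟩,
    hk01, fun y d hd => forwardInf_le_forwardInf_flow hbdd y hd, fun a ha => ?_, hkB,
    fun y hy => ?_⟩
  · by_cases hy : y ∈ dualRepeller ϕ P
    · exact ⟨0, .of_forall fun z t _ => (hb.trans_eq (hkB y hy)).trans_le (hf01 _).1⟩
    · exact htail y hy b (hb.trans_le (hk01 y).2)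
  · exact le_antisymm (hk01 a).2
      (le_forwardInf fun t => (hfA _ (isInvariant_omegaLimit_atTop ϕ P t ha)).ge)
  · obtain ⟨hyA, hyB⟩ := not_or.1 hy
    have hfy : f y < 1 := (hf01 y).2.lt_of_ne fun h => hyA (hAf ▸ h)
    obtain ⟨b, hkb, hb1⟩ := exists_between ((forwardInf_le_self hbdd y).trans_lt hfy)
    obtain ⟨T, hT⟩ := htail y hyB b hb1
    refine ⟨max T 0, hkb.trans_le (le_forwardInf fun t => ?_)⟩
    rw [← ϕ.map_add]
    exact (hT.self_of_nhds _ (by linarith [le_max_left T 0, t.coe_nonneg])).le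

theorem exists_strictMono_lyapunov (hPo : IsOpen P) (hP : ∀ s, 1 ≤ s → MapsTo (ϕ s) (closure P) P) :
    ∃ g : M → ℝ, Continuous g ∧ (∀ a ∈ ω atTop ϕ P, g a = 2) ∧
      (∀ b ∈ dualRepeller ϕ P, g b = 0) ∧
      ∀ y ∉ ω atTop ϕ P ∪ dualRepeller ϕ P, ∀ d, 0 < d → g y < g (ϕ d y) := by
  obtain ⟨k, hk, hk01, hmono, hkA, hkB, hkstrict⟩ := exists_monotone_lyapunov hPo hP
  obtain ⟨g, hg, hgconst, hgstrict⟩ := exists_strictMono_average hk hk01 hmono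
  refine ⟨g, hg, fun a ha => ?_, fun b hb => ?_, fun y hy d hd => hgstrict y d hd (hkstrict y hy)⟩
  · rw [hgconst a fun t _ => by rw [hkA _ (isInvariant_omegaLimit_atTop ϕ P t ha), hkA a ha],
      hkA a ha, mul_one]
  · rw [hgconst b fun t ht => by rw [hkB _ (mapsTo_dualRepeller ht hb), hkB b hb], hkB b hb,
      mul_zero]

end Lyapunov

lemma exists_isNullLevelSetCS_of_lyapunov {M : Type*} [TopologicalSpace M] [PreconnectedSpace M]
    {ϕ : Flow ℝ M} {A B : Set M} (hA : IsClosed A) (hB : IsClosed B) (hAne : A.Nonempty)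
    (hBne : B.Nonempty) {g : M → ℝ} (hg : Continuous g) (hgA : ∀ a ∈ A, g a = 2)
    (hgB : ∀ b ∈ B, g b = 0) (hgmono : ∀ y ∉ A ∪ B, ∀ d, 0 < d → g y < g (ϕ d y)) :
    ∃ S, IsNullLevelSetCS ϕ S := by
  obtain ⟨a, ha⟩ := hAne
  obtain ⟨b, hb⟩ := hBne
  obtain ⟨y, hy⟩ : (1 : ℝ) ∈ range g :=
    intermediate_value_univ b a hg ⟨by norm_num [hgB b hb], by norm_num [hgA a ha]⟩
  refine ⟨g ⁻¹' {1}, ⟨y, hy⟩, g, 1, (A ∪ B)ᶜ, hg, rfl, (hA.union hB).isOpen_compl, ?_, ?_⟩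
  · rintro z hz (hzA | hzB)
    · norm_num [hgA z hzA] at hz
    · norm_num [hgB z hzB] at hz
  · intro x s s' hss' hseg
    simpa [← ϕ.map_add] using hgmono (ϕ s x) (hseg s ⟨le_rfl, hss'.le⟩) (s' - s) (by linarith)

theorem exists_isNullLevelSetCS_of_not_chainRecPt {M : Type*} [MetricSpace M] [CompactSpace M]
    [PreconnectedSpace M] {ϕ : Flow ℝ M} {x : M} (hx : ¬ ChainRecPt ϕ x) :
    ∃ S, IsNullLevelSetCS ϕ S := by
  obtain ⟨ε, hε, hxx⟩ : ∃ ε, 0 < ε ∧ ¬ IsChainWith ϕ dist ε x x := by simpa [ChainRecPt] using hx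
  set P := {y | IsChainWith ϕ dist ε x y}
  have hPo : IsOpen P := isOpen_setOf_isChainWith ϕ ε x
  have hP : ∀ s, 1 ≤ s → MapsTo (ϕ s) (closure P) P := fun s hs =>
    mapsTo_closure_setOf_isChainWith ϕ x hε hs
  obtain ⟨g, hg, hgA, hgB, hgmono⟩ := exists_strictMono_lyapunov hPo hP
  exact exists_isNullLevelSetCS_of_lyapunov (isClosed_omegaLimit _ _ _) (isClosed_dualRepeller hPo)
    (nonempty_omegaLimit _ _ _ ⟨ϕ 1 x, isChainWith_of_lt le_rfl (by simpa using hε)⟩)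
    (nonempty_dualRepeller hP hPo fun h => hxx (show x ∈ P from h ▸ mem_univ x)) hg hgA hgB hgmono

end Flow

/-- **Existence of null-cohomologous partial cross-sections.**
Let `M` be a compact connected metric space with a continuous flow `φ`. Then `φ` admits
a null-class level-set cross-section if and only if `φ` is not chain recurrent. -/
theorem exists_nullCrossSection_iff_not_chainRecurrent
    {M : Type*} [MetricSpace M] [CompactSpace M] [ConnectedSpace M]
    (φ : ℝ → M → M)
    (hφc : Continuous fun p : ℝ × M => φ p.1 p.2)
    (hφ0 : ∀ x : M, φ 0 x = x)
    (hφadd : ∀ (s t : ℝ) (x : M), φ (s + t) x = φ s (φ t x)) :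
    (∃ S : Set M, IsNullLevelSetCS φ S) ↔ ¬ (∀ x : M, ChainRecPt φ x) := by
  let ϕ : Flow ℝ M := ⟨φ, hφc, hφadd, hφ0⟩
  constructor
  · rintro ⟨S, ⟨x, hx⟩, g, c, U, hg, rfl, hU, hSU, hincr⟩ hrec
    exact Flow.not_chainRecPt_of_flowStrictIncrOn (ϕ := ϕ) hg hU hSU hincr hx (hrec x)
  · intro h
    obtain ⟨x, hx⟩ := not_forall.1 h
    exact Flow.exists_isNullLevelSetCS_of_not_chainRecPt (ϕ := ϕ) hx
end

section
/- Let M be a compact metric space equipped with a continuous flow φ, and let f₀ : M → ℝ/ℤ be a continuous map not homotopic to a constant map. Then there exists a countable (possibly empty) family of level-set cross-sections for f₀ such that every level-set cross-section for f₀ is isotopic along the flow to a member of the family. In other words, the set of partial cross-sections cohomologous to α = [f₀], considered up to isotopy along the flow, is at most countable. -/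
/-- The ℤ-cover of `M` associated with a circle-valued map `f₀`:
`N = {(x,t) ∈ M × ℝ : f₀ x = t mod 1}`, with the subspace topology. -/
abbrev ZCover {M : Type*} [MetricSpace M] (f₀ : M → AddCircle (1:ℝ)) : Type _ :=
  {p : M × ℝ // f₀ p.1 = (p.2 : AddCircle (1:ℝ))}

/-- The covering projection `π : N → M`. -/
def zProj {M : Type*} [MetricSpace M] (f₀ : M → AddCircle (1:ℝ)) : ZCover f₀ → M :=
  fun y => y.val.1

/-- The deck transformation `T : N → N`, `(x,t) ↦ (x, t+1)`. -/
def zDeck {M : Type*} [MetricSpace M] (f₀ : M → AddCircle (1:ℝ)) : ZCover f₀ → ZCover f₀ :=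
  fun y => ⟨(y.val.1, y.val.2 + 1), by
    have h := y.prop
    simpa [AddCircle.coe_add_period 1 y.val.2] using h⟩

/-- A level-set cross-section for `f₀`: the injective image in `M` of a level set
`F⁻¹ {c}` of a continuous ℤ-equivariant function `F` on the ℤ-cover which is
strictly increasing along the lifted flow `ψ` on an open set containing the level set. -/
def IsLevelSetCS {M : Type*} [MetricSpace M] (f₀ : M → AddCircle (1:ℝ))
    (ψ : ℝ → ZCover f₀ → ZCover f₀) (S : Set M) : Prop :=
  ∃ (F : ZCover f₀ → ℝ) (c : ℝ) (U : Set (ZCover f₀)),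
    Continuous F ∧ (∀ y, F (zDeck f₀ y) = F y + 1) ∧
    (F ⁻¹' {c}).Nonempty ∧ IsOpen U ∧ F ⁻¹' {c} ⊆ U ∧
    (∀ (y : ZCover f₀) (s s' : ℝ), s < s' → (∀ u ∈ Set.Icc s s', ψ u y ∈ U) →
      F (ψ s y) < F (ψ s' y)) ∧
    S = zProj f₀ '' (F ⁻¹' {c})

/-- `S` is topologically transverse to the flow `φ`: every point of `S` has a
neighborhood `V ∩ S` in `S` and a time `t > 0` such that an orbit segment of length
`≤ t` starting in `V ∩ S` returns to `V ∩ S` only at time `0`. -/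
def TopTransverse {M : Type*} [TopologicalSpace M] (φ : ℝ → M → M) (S : Set M) : Prop :=
  ∀ x ∈ S, ∃ t : ℝ, 0 < t ∧ ∃ V : Set M, IsOpen V ∧ x ∈ V ∧
    ∀ y ∈ V ∩ S, ∀ s ∈ Set.Icc (-t) t, φ s y ∈ V ∩ S → s = 0

/-- `S` and `S'` are isotopic along the flow `φ`: there is a continuous family
`θ : [0,1] × S → ℝ` with `θ 0 = 0` such that each `x ↦ φ (θ t x) x` is injective on `S`
with topologically transverse image, the image at time `1` being `S'`. -/
def IsotopicAlongFlow {M : Type*} [TopologicalSpace M] (φ : ℝ → M → M) (S S' : Set M) : Prop :=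
  ∃ θ : ℝ → M → ℝ,
    ContinuousOn (fun p : ℝ × M => θ p.1 p.2) (Set.Icc (0:ℝ) 1 ×ˢ S) ∧
    (∀ x ∈ S, θ 0 x = 0) ∧
    (∀ t ∈ Set.Icc (0:ℝ) 1,
      Set.InjOn (fun x => φ (θ t x) x) S ∧
      TopTransverse φ ((fun x => φ (θ t x) x) '' S)) ∧
    (fun x => φ (θ 1 x) x) '' S = S'

/-!
A level-set cross-section `S` is compact, and its equivariant function is strictly increasing
along the lifted flow near its level set; hence every point near `S` flows onto `S` within a
short time `η`, at a unique time in `[-3η, 3η]` (`IsFlowCollar`). If two cross-sections share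
such a collar and are closer than its width in the Hausdorff distance, the time `τ` at which the
flow carries the first onto the second is continuous, and `t ↦ φ_{tτ}` is an isotopy. Sorting
cross-sections by the size of their collars, countability follows from the separability of the
space of closed subsets of `M` with the Hausdorff distance.
-/

open Set Filter Topology Metric TopologicalSpace

theorem exists_countable_subset_hausdorffEDist_lt {X : Type*} [EMetricSpace X]
    [CompactSpace X] (𝒮 : Set (Set X)) :
    ∃ 𝒟 ⊆ 𝒮, 𝒟.Countable ∧ ∀ S ∈ 𝒮, ∀ r > 0, ∃ T ∈ 𝒟, hausdorffEDist S T < r := by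
  obtain ⟨𝒯, h𝒯, h𝒯c, hdense⟩ :=
    (IsSeparable.of_separableSpace (Closeds.closure '' 𝒮)).exists_countable_dense_subset
  choose! rep hrep𝒮 hrep using fun C (hC : C ∈ 𝒯) => h𝒯 hC
  refine ⟨rep '' 𝒯, image_subset_iff.2 hrep𝒮, h𝒯c.image rep, fun S hS r hr => ?_⟩
  obtain ⟨C, hC, hSC⟩ := EMetric.mem_closure_iff.1 (hdense (mem_image_of_mem _ hS)) r hr
  refine ⟨rep C, mem_image_of_mem _ hC, ?_⟩
  rwa [← hrep C hC, Closeds.edist_eq, Closeds.coe_closure, Closeds.coe_closure,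
    hausdorffEDist_closure] at hSC

theorem MapClusterPt.prodMk_of_tendsto {α X Y : Type*} [TopologicalSpace X] [TopologicalSpace Y]
    {F : Filter α} {f : α → X} {g : α → Y} {x : X} {y : Y} (hf : MapClusterPt x F f)
    (hg : Tendsto g F (𝓝 y)) : MapClusterPt (x, y) F fun a => (f a, g a) := by
  rw [((𝓝 x).basis_sets.prod_nhds (𝓝 y).basis_sets).mapClusterPt_iff_frequently]
  rintro ⟨s, t⟩ ⟨hs, ht⟩
  exact (hf.frequently hs).and_eventually (hg ht)

theorem continuousOn_hittingTime {X : Type*} [TopologicalSpace X] {φ : ℝ → X → X}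
    (hφc : Continuous fun p : ℝ × X => φ p.1 p.2) {A T : Set X} (hT : IsClosed T) {I : Set ℝ}
    (hI : IsCompact I) {τ : X → ℝ} (hτ : ∀ x ∈ A, τ x ∈ I ∧ φ (τ x) x ∈ T)
    (hτ_unique : ∀ x ∈ A, ∀ s ∈ I, φ s x ∈ T → s = τ x) : ContinuousOn τ A := by
  intro x hx
  refine hI.tendsto_nhds_of_unique_mapClusterPt
    (eventually_nhdsWithin_of_forall fun y hy => (hτ y hy).1) fun s hs hcl => ?_
  have hcl' : MapClusterPt (φ s x) (𝓝[A] x) fun y => φ (τ y) y :=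
    (hcl.prodMk_of_tendsto continuousWithinAt_id).tendsto_comp (hφc.tendsto (s, x))
  exact hτ_unique x hx s hs
    (hT.mem_of_mapClusterPt hcl' (eventually_nhdsWithin_of_forall fun y hy => (hτ y hy).2))

theorem flow_neg_apply {X : Type*} {φ : ℝ → X → X} (hφ0 : ∀ x, φ 0 x = x)
    (hφadd : ∀ s t x, φ (s + t) x = φ s (φ t x)) (s : ℝ) (x : X) : φ (-s) (φ s x) = x := by
  rw [← hφadd, neg_add_cancel, hφ0]

section FlowCollar

variable {M : Type*} [MetricSpace M] {φ : ℝ → M → M} {S T : Set M} {η ε ε' : ℝ}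

/-- The window `3 * η` leaves room for two hitting times in `[-η, η]` and a transversality
time `η`. -/
def IsFlowCollar (φ : ℝ → M → M) (S : Set M) (η ε : ℝ) : Prop :=
  ∀ x ∈ thickening ε S, (Icc (-η) η ∩ (φ · x) ⁻¹' S).Nonempty ∧
    (Icc (-(3 * η)) (3 * η) ∩ (φ · x) ⁻¹' S).Subsingleton

theorem IsFlowCollar.mono (h : IsFlowCollar φ S η ε) (hε : ε' ≤ ε) : IsFlowCollar φ S η ε' :=
  fun x hx => h x (thickening_mono hε S hx)

theorem IsFlowCollar.eq_of_flow_eq (hS : IsFlowCollar φ S η ε) (hφ0 : ∀ x, φ 0 x = x)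
    (hφadd : ∀ s t x, φ (s + t) x = φ s (φ t x)) (hε : 0 < ε)
    {x₁ x₂ : M} (hx₁ : x₁ ∈ S) (hx₂ : x₂ ∈ S) {a b : ℝ} (hab : |a - b| ≤ 3 * η)
    (h : φ a x₁ = φ b x₂) : a = b ∧ x₁ = x₂ := by
  have hx₂_eq : φ (a - b) x₁ = x₂ := by
    rw [sub_eq_neg_add, hφadd, h, flow_neg_apply hφ0 hφadd]
  have hη : 0 ≤ η := by linarith [abs_nonneg (a - b)]
  have hab0 : a - b = 0 :=
    (hS x₁ (self_subset_thickening hε S hx₁)).2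
      ⟨abs_le.1 hab, show φ (a - b) x₁ ∈ S by rwa [hx₂_eq]⟩
      ⟨⟨by linarith, by linarith⟩, show φ 0 x₁ ∈ S by rwa [hφ0]⟩
  rw [hab0, hφ0] at hx₂_eq
  exact ⟨sub_eq_zero.1 hab0, hx₂_eq⟩

theorem IsFlowCollar.injOn_flow (hS : IsFlowCollar φ S η ε) (hφ0 : ∀ x, φ 0 x = x)
    (hφadd : ∀ s t x, φ (s + t) x = φ s (φ t x)) (hε : 0 < ε)
    {θ : M → ℝ} (hθ : ∀ x ∈ S, |θ x| ≤ η) : InjOn (fun x => φ (θ x) x) S := by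
  intro x₁ hx₁ x₂ hx₂ h
  refine (hS.eq_of_flow_eq hφ0 hφadd hε hx₁ hx₂ ?_ h).2
  linarith [abs_sub (θ x₁) (θ x₂), abs_nonneg (θ x₁), hθ x₁ hx₁, hθ x₂ hx₂]

theorem IsFlowCollar.topTransverse_image (hS : IsFlowCollar φ S η ε) (hφ0 : ∀ x, φ 0 x = x)
    (hφadd : ∀ s t x, φ (s + t) x = φ s (φ t x)) (hε : 0 < ε) (hη : 0 < η) {θ : M → ℝ}
    (hθ : ∀ x ∈ S, |θ x| ≤ η) :
    TopTransverse φ ((fun x => φ (θ x) x) '' S) := by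
  rintro - -
  refine ⟨η, hη, univ, isOpen_univ, trivial, ?_⟩
  rintro - ⟨-, x₁, hx₁, rfl⟩ s hs ⟨-, x₂, hx₂, h⟩
  rw [← hφadd] at h
  obtain ⟨hab, rfl⟩ := hS.eq_of_flow_eq hφ0 hφadd hε hx₁ hx₂
    (by linarith [abs_le.2 hs, abs_sub (s + θ x₁) (θ x₂), abs_add_le s (θ x₁), hθ x₁ hx₁,
      hθ x₂ hx₂]) h.symm
  simpa using hab

theorem IsFlowCollar.isotopicAlongFlow (hS : IsFlowCollar φ S η ε)
    (hφc : Continuous fun p : ℝ × M => φ p.1 p.2) (hφ0 : ∀ x, φ 0 x = x)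
    (hφadd : ∀ s t x, φ (s + t) x = φ s (φ t x)) (hη : 0 < η) (hε : 0 < ε)
    (hT : IsFlowCollar φ T η ε) (hTc : IsClosed T)
    (hST : hausdorffEDist S T < ENNReal.ofReal ε) : IsotopicAlongFlow φ S T := by
  have hS_near : S ⊆ thickening ε T := fun x hx =>
    mem_thickening_iff_infEDist_lt.2 ((infEDist_le_hausdorffEDist_of_mem hx).trans_lt hST)
  have hT_near : T ⊆ thickening ε S := fun y hy => mem_thickening_iff_infEDist_lt.2
    ((infEDist_le_hausdorffEDist_of_mem hy).trans_lt (hausdorffEDist_comm.trans_lt hST))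
  choose! τ hτ using fun x (hx : x ∈ S) => (hT x (hS_near hx)).1
  have hwiden : Icc (-η) η ⊆ Icc (-(3 * η)) (3 * η) :=
    Icc_subset_Icc (by linarith) (by linarith)
  have hτ_unique : ∀ x ∈ S, ∀ s ∈ Icc (-η) η, φ s x ∈ T → s = τ x := fun x hx s hs hsT =>
    (hT x (hS_near hx)).2 ⟨hwiden hs, hsT⟩ ⟨hwiden (hτ x hx).1, (hτ x hx).2⟩
  have hτc : ContinuousOn τ S := continuousOn_hittingTime hφc hTc isCompact_Icc hτ hτ_unique
  refine ⟨fun t x => t * τ x, continuousOn_fst.mul (hτc.comp continuousOn_snd fun p hp => hp.2),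
    fun x _ => zero_mul _, fun t ht => ?_, ?_⟩
  · have hθ : ∀ x ∈ S, |t * τ x| ≤ η := fun x hx => by
      rw [abs_mul, abs_of_nonneg ht.1]
      exact (mul_le_of_le_one_left (abs_nonneg _) ht.2).trans (abs_le.2 (hτ x hx).1)
    exact ⟨hS.injOn_flow hφ0 hφadd hε hθ, hS.topTransverse_image hφ0 hφadd hε hη hθ⟩
  · refine (image_subset_iff.2 fun x hx => by simpa using (hτ x hx).2).antisymm fun y hy => ?_
    obtain ⟨s, hs, hsS⟩ := (hS y (hT_near hy)).1
    have hback : φ (-s) (φ s y) = y := flow_neg_apply hφ0 hφadd s y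
    have hτs : -s = τ (φ s y) :=
      hτ_unique _ hsS (-s) ⟨by linarith [hs.2], by linarith [hs.1]⟩ (by rwa [hback])
    exact ⟨φ s y, hsS, by simp [← hτs, hback]⟩

end FlowCollar

section ZCover

variable {M : Type*} [MetricSpace M] {f₀ : M → AddCircle (1 : ℝ)}

theorem continuous_zProj : Continuous (zProj f₀) := continuous_subtype_val.fst

def zShift (k : ℤ) (z : ZCover f₀) : ZCover f₀ :=
  ⟨(z.1.1, z.1.2 + k), by
    rw [z.2, AddCircle.coe_add, (AddCircle.coe_eq_zero_iff (x := (k : ℝ)) 1).2 ⟨k, by simp⟩,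
      add_zero]⟩

theorem apply_zShift {F : ZCover f₀ → ℝ} (hF : ∀ y, F (zDeck f₀ y) = F y + 1) (k : ℤ)
    (z : ZCover f₀) : F (zShift k z) = F z + k := by
  induction k using Int.induction_on with
  | zero => simp [zShift]
  | succ k ih =>
    have hshift : zShift (k + 1) z = zDeck f₀ (zShift k z) := by
      ext <;> simp [zShift, zDeck, add_assoc]
    rw [hshift, hF, ih]; push_cast; ring
  | pred k ih =>
    have hshift : zShift (-k) z = zDeck f₀ (zShift (-k - 1) z) := by
      ext <;> simp [zShift, zDeck]; ring
    rw [hshift, hF] at ih; push_cast at ih ⊢; linarith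

theorem exists_zShift_eq_of_zProj_eq {u v : ZCover f₀} (h : zProj f₀ u = zProj f₀ v) :
    ∃ k : ℤ, v = zShift k u := by
  have h' : ((v.1.2 - u.1.2 : ℝ) : AddCircle (1 : ℝ)) = 0 := by
    rw [AddCircle.coe_sub, ← v.2, ← u.2, show u.1.1 = v.1.1 from h, sub_self]
  obtain ⟨k, hk⟩ := (AddCircle.coe_eq_zero_iff 1).1 h'
  exact ⟨k, Subtype.ext (Prod.ext h.symm (by simp only [zShift, zsmul_eq_mul, mul_one] at hk ⊢; linarith))⟩

theorem zProj_mem_image_preimage_singleton_iff {F : ZCover f₀ → ℝ}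
    (hF : ∀ y, F (zDeck f₀ y) = F y + 1) {c : ℝ} (z : ZCover f₀) :
    zProj f₀ z ∈ zProj f₀ '' (F ⁻¹' {c}) ↔ ∃ k : ℤ, F z = c + k := by
  constructor
  · rintro ⟨w, hw, hwz⟩
    obtain ⟨k, rfl⟩ := exists_zShift_eq_of_zProj_eq hwz
    exact ⟨k, by rw [apply_zShift hF, show F w = c from hw]⟩
  · rintro ⟨k, hk⟩
    exact ⟨zShift (-k) z, by simp [apply_zShift hF, hk], rfl⟩

theorem zProj_isOpenMap (hf₀ : Continuous f₀) : IsOpenMap (zProj f₀) := by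
  refine IsOpenMap.of_sections fun z => ?_
  let lift : M → ℝ := fun x => AddCircle.equivIco 1 (z.1.2 - 1 / 2) (f₀ x)
  refine ⟨fun x => ⟨(x, lift x), AddCircle.coe_equivIco.symm⟩, ?_, ?_, fun x => rfl⟩
  · have hz : f₀ z.1.1 ≠ ((z.1.2 - 1 / 2 : ℝ) : AddCircle (1 : ℝ)) := by
      rw [z.2]
      intro h
      linarith [(AddCircle.coe_eq_coe_iff_of_mem_Ico (a := z.1.2 - 1 / 2)
        ⟨by linarith, by linarith⟩ ⟨le_rfl, by linarith⟩).1 h]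
    exact (continuousAt_id.prodMk (continuousAt_subtype_val.comp
      ((AddCircle.continuousAt_equivIco 1 _ hz).comp hf₀.continuousAt))).codRestrict _
  · refine Subtype.ext (Prod.ext rfl ?_)
    show (AddCircle.equivIco 1 (z.1.2 - 1 / 2) (f₀ z.1.1) : ℝ) = z.1.2
    rw [z.2, AddCircle.equivIco_coe_eq ⟨by linarith, by linarith⟩]

section Compact

variable [CompactSpace M] (hf₀ : Continuous f₀)
include hf₀

theorem ZCover.isCompact_of_isClosed_of_abs_snd_le {C : Set (ZCover f₀)} (hC : IsClosed C)
    {B : ℝ} (hB : ∀ z ∈ C, |z.1.2| ≤ B) : IsCompact C := by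
  have hcl : IsClosedEmbedding (Subtype.val : ZCover f₀ → M × ℝ) :=
    (isClosed_eq (hf₀.comp continuous_fst)
      ((AddCircle.continuous_mk' 1).comp continuous_snd)).isClosedEmbedding_subtypeVal
  rw [hcl.isCompact_iff]
  refine (isCompact_univ.prod (isCompact_Icc (a := -B) (b := B))).of_isClosed_subset
    (hcl.isClosedMap C hC) ?_
  rintro - ⟨z, hz, rfl⟩
  exact ⟨trivial, abs_le.1 (hB z hz)⟩

theorem ZCover.exists_abs_sub_snd_le {F : ZCover f₀ → ℝ} (hFc : Continuous F)
    (hF : ∀ y, F (zDeck f₀ y) = F y + 1) : ∃ C, ∀ z : ZCover f₀, |F z - z.1.2| ≤ C := by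
  set D : Set (ZCover f₀) := {z | z.1.2 ∈ Icc 0 1}
  have hD : IsCompact D := ZCover.isCompact_of_isClosed_of_abs_snd_le hf₀
    (isClosed_Icc.preimage continuous_subtype_val.snd)
    fun z hz => abs_le.2 ⟨by linarith [hz.1], hz.2⟩
  obtain ⟨C, hC⟩ :=
    hD.exists_bound_of_continuousOn (hFc.sub continuous_subtype_val.snd).continuousOn
  refine ⟨C, fun z => ?_⟩
  have hfract : (zShift (-⌊z.1.2⌋) z).1.2 = Int.fract z.1.2 := by
    simp [zShift, Int.fract, sub_eq_add_neg]
  have hzD : zShift (-⌊z.1.2⌋) z ∈ D :=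
    show _ ∈ Icc _ _ by rw [hfract]; exact ⟨Int.fract_nonneg _, (Int.fract_lt_one _).le⟩
  have := hC _ hzD
  rw [Real.norm_eq_abs, Pi.sub_apply, apply_zShift hF, hfract, Int.fract] at this
  convert this using 2
  push_cast; ring

theorem ZCover.isCompact_preimage_singleton {F : ZCover f₀ → ℝ} (hFc : Continuous F)
    (hF : ∀ y, F (zDeck f₀ y) = F y + 1) (c : ℝ) : IsCompact (F ⁻¹' {c}) := by
  obtain ⟨C, hC⟩ := ZCover.exists_abs_sub_snd_le hf₀ hFc hF
  refine ZCover.isCompact_of_isClosed_of_abs_snd_le hf₀ (isClosed_singleton.preimage hFc)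
    (B := C + |c|) fun z (hz : F z = c) => ?_
  have hz₂ := hC z
  rw [hz, abs_sub_comm] at hz₂
  linarith [abs_sub_abs_le_abs_sub z.1.2 c]

end Compact

end ZCover

section LevelSet

variable {M : Type*} [MetricSpace M] {f₀ : M → AddCircle (1 : ℝ)}
  {ψ : ℝ → ZCover f₀ → ZCover f₀} {F : ZCover f₀ → ℝ} {c : ℝ} {U : Set (ZCover f₀)}

theorem exists_nhds_strictMonoOn_flow (hψc : Continuous fun p : ℝ × ZCover f₀ => ψ p.1 p.2)
    (hψ0 : ∀ y, ψ 0 y = y) (hFc : Continuous F) (hK : IsCompact (F ⁻¹' {c})) (hU : IsOpen U)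
    (hKU : F ⁻¹' {c} ⊆ U)
    (hmono : ∀ y s s', s < s' → (∀ u ∈ Icc s s', ψ u y ∈ U) → F (ψ s y) < F (ψ s' y)) :
    ∃ a > 0, ∃ V, IsOpen V ∧ F ⁻¹' {c} ⊆ V ∧ ∀ z ∈ V,
      StrictMonoOn (fun s => F (ψ s z)) (Icc (-a) a) ∧
      ∀ s ∈ Icc (-a) a, ∀ k : ℤ, F (ψ s z) = c + k → k = 0 := by
  set W : Set (ℝ × ZCover f₀) := {p | ψ p.1 p.2 ∈ U ∧ |F (ψ p.1 p.2) - c| < 1 / 2}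
  have hW : IsOpen W :=
    (hU.preimage hψc).inter (isOpen_lt ((hFc.comp hψc).sub continuous_const).abs continuous_const)
  have hKW : {(0 : ℝ)} ×ˢ (F ⁻¹' {c}) ⊆ W := by
    rintro ⟨s, z⟩ ⟨rfl, hz⟩
    simp only [W, mem_ofPred_eq, hψ0]
    exact ⟨hKU hz, by simp [show F z = c from hz]⟩
  obtain ⟨I, V, hI, hV, h0I, hKV, hIVW⟩ := generalized_tube_lemma isCompact_singleton hK hW hKW
  obtain ⟨δ, hδ, hball⟩ := Metric.isOpen_iff.1 hI 0 (h0I rfl)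
  have hIcc : Icc (-(δ / 2)) (δ / 2) ⊆ I := fun s hs =>
    hball (by rw [mem_ball, Real.dist_0_eq_abs]; exact (abs_le.2 hs).trans_lt (by linarith))
  refine ⟨δ / 2, by positivity, V, hV, hKV, fun z hz => ⟨?_, fun s hs k hk => ?_⟩⟩
  · intro s hs s' hs' hlt
    exact hmono z s s' hlt fun u hu =>
      (hIVW (mk_mem_prod (hIcc ⟨hs.1.trans hu.1, hu.2.trans hs'.2⟩) hz)).1
  · have h := (hIVW (mk_mem_prod (hIcc hs) hz)).2
    rw [hk, add_sub_cancel_left, ← Int.cast_abs] at h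
    exact Int.abs_lt_one_iff.1 (by exact_mod_cast h.trans one_half_lt_one)

theorem exists_nhds_forall_exists_flow_eq (hψc : Continuous fun p : ℝ × ZCover f₀ => ψ p.1 p.2)
    (hψ0 : ∀ y, ψ 0 y = y) (hFc : Continuous F) {η : ℝ} (hη : 0 < η)
    (hmono : ∀ z ∈ F ⁻¹' {c}, StrictMonoOn (fun s => F (ψ s z)) (Icc (-η) η)) :
    ∃ V, IsOpen V ∧ F ⁻¹' {c} ⊆ V ∧ ∀ z ∈ V, ∃ s ∈ Icc (-η) η, F (ψ s z) = c := by
  have hcont : ∀ s, Continuous fun z => F (ψ s z) := fun s =>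
    hFc.comp (hψc.comp (continuous_const.prodMk continuous_id))
  refine ⟨{z | F (ψ (-η) z) < c ∧ c < F (ψ η z)},
    (isOpen_lt (hcont _) continuous_const).inter (isOpen_lt continuous_const (hcont _)),
    fun z (hz : F z = c) => ?_, fun z hz => ?_⟩
  · have h0 : (0 : ℝ) ∈ Icc (-η) η := ⟨by linarith, hη.le⟩
    have hψz : F (ψ 0 z) = c := by rw [hψ0, hz]
    exact ⟨hψz ▸ hmono z hz ⟨le_rfl, by linarith⟩ h0 (neg_lt_zero.2 hη),
      hψz ▸ hmono z hz h0 ⟨by linarith, le_rfl⟩ hη⟩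
  · exact intermediate_value_Icc (neg_le_self hη.le)
      (hFc.comp (hψc.comp (continuous_id.prodMk continuous_const))).continuousOn
      ⟨hz.1.le, hz.2.le⟩

theorem IsLevelSetCS.exists_isFlowCollar [CompactSpace M] {S : Set M} (hS : IsLevelSetCS f₀ ψ S)
    {φ : ℝ → M → M} (hf₀ : Continuous f₀) (hψc : Continuous fun p : ℝ × ZCover f₀ => ψ p.1 p.2)
    (hψ0 : ∀ y, ψ 0 y = y) (hlift : ∀ s y, zProj f₀ (ψ s y) = φ s (zProj f₀ y)) :
    IsCompact S ∧ ∃ a > 0, ∀ η ∈ Ioc 0 a, ∃ ε > 0, IsFlowCollar φ S η ε := by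
  obtain ⟨F, c, U, hFc, hF, -, hU, hKU, hmono, rfl⟩ := hS
  have hK := ZCover.isCompact_preimage_singleton hf₀ hFc hF c
  obtain ⟨a, ha, V, hV, hKV, hVflow⟩ :=
    exists_nhds_strictMonoOn_flow hψc hψ0 hFc hK hU hKU hmono
  refine ⟨hK.image continuous_zProj, a / 3, by positivity, fun η hη => ?_⟩
  have hwin : Icc (-(3 * η)) (3 * η) ⊆ Icc (-a) a :=
    Icc_subset_Icc (by linarith [hη.2]) (by linarith [hη.2])
  have hwin' : Icc (-η) η ⊆ Icc (-a) a :=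
    Icc_subset_Icc (by linarith [hη.1, hη.2]) (by linarith [hη.1, hη.2])
  obtain ⟨V', hV', hKV', hcross⟩ := exists_nhds_forall_exists_flow_eq hψc hψ0 hFc hη.1
    fun z hz => (hVflow z (hKV hz)).1.mono hwin'
  obtain ⟨ε, hε, hthick⟩ := (hK.image continuous_zProj).exists_thickening_subset_open
    (zProj_isOpenMap hf₀ _ (hV.inter hV')) (image_mono (subset_inter hKV hKV'))
  refine ⟨ε, hε, fun x hx => ?_⟩
  obtain ⟨z, ⟨hzV, hzV'⟩, rfl⟩ := hthick hx
  have hmem : ∀ s, φ s (zProj f₀ z) ∈ zProj f₀ '' (F ⁻¹' {c}) ↔ ∃ k : ℤ, F (ψ s z) = c + k :=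
    fun s => by rw [← hlift, zProj_mem_image_preimage_singleton_iff hF]
  constructor
  · obtain ⟨s, hs, hFs⟩ := hcross z hzV'
    exact ⟨s, hs, (hmem s).2 ⟨0, by simp [hFs]⟩⟩
  · have hlevel : ∀ s ∈ Icc (-(3 * η)) (3 * η) ∩ (φ · (zProj f₀ z)) ⁻¹' (zProj f₀ '' (F ⁻¹' {c})),
        F (ψ s z) = c := by
      rintro s ⟨hs, hsS⟩
      obtain ⟨k, hk⟩ := (hmem s).1 hsS
      rw [hk, (hVflow z hzV).2 s (hwin hs) k hk, Int.cast_zero, add_zero]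
    intro r₁ hr₁ r₂ hr₂
    exact (hVflow z hzV).1.injOn (hwin hr₁.1) (hwin hr₂.1)
      ((hlevel r₁ hr₁).trans (hlevel r₂ hr₂).symm)

end LevelSet

theorem crossSections_upto_isotopy_countable_general
    {M : Type*} [MetricSpace M] [CompactSpace M]
    (f₀ : M → AddCircle (1:ℝ)) (hf₀ : Continuous f₀)
    (φ : ℝ → M → M)
    (hφc : Continuous fun p : ℝ × M => φ p.1 p.2)
    (hφ0 : ∀ x : M, φ 0 x = x)
    (hφadd : ∀ (s t : ℝ) (x : M), φ (s + t) x = φ s (φ t x))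
    (ψ : ℝ → ZCover f₀ → ZCover f₀)
    (hψc : Continuous fun p : ℝ × ZCover f₀ => ψ p.1 p.2)
    (hψ0 : ∀ y : ZCover f₀, ψ 0 y = y)
    (hlift : ∀ (s : ℝ) (y : ZCover f₀), zProj f₀ (ψ s y) = φ s (zProj f₀ y))
    :
    ∃ 𝒞 : Set (Set M), 𝒞.Countable ∧ (∀ S ∈ 𝒞, IsLevelSetCS f₀ ψ S) ∧
      ∀ S : Set M, IsLevelSetCS f₀ ψ S → ∃ S' ∈ 𝒞, IsotopicAlongFlow φ S S' := by
  let 𝒮 : ℕ → ℕ → Set (Set M) := fun n m =>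
    {S | IsLevelSetCS f₀ ψ S ∧ IsFlowCollar φ S (1 / (m + 1)) (1 / (n + 1))}
  choose 𝒟 h𝒟𝒮 h𝒟c h𝒟dense using
    fun n m => exists_countable_subset_hausdorffEDist_lt (𝒮 n m)
  refine ⟨⋃ n, ⋃ m, 𝒟 n m, countable_iUnion fun n => countable_iUnion fun m => h𝒟c n m,
    fun S hS => ?_, fun S hS => ?_⟩
  · obtain ⟨n, m, hS⟩ := mem_iUnion₂.1 hS
    exact (h𝒟𝒮 n m hS).1
  obtain ⟨-, a, ha, hcollar⟩ := hS.exists_isFlowCollar hf₀ hψc hψ0 hlift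
  obtain ⟨m, hm⟩ := exists_nat_one_div_lt ha
  obtain ⟨ε, hε, hSε⟩ := hcollar _ ⟨Nat.one_div_pos_of_nat, hm.le⟩
  obtain ⟨n, hn⟩ := exists_nat_one_div_lt hε
  have hSn := hSε.mono hn.le
  obtain ⟨T, hT, hST⟩ :=
    h𝒟dense n m S ⟨hS, hSn⟩ _ (ENNReal.ofReal_pos.2 Nat.one_div_pos_of_nat)
  obtain ⟨hTcs, hTn⟩ := h𝒟𝒮 n m hT
  have hTc := (hTcs.exists_isFlowCollar hf₀ hψc hψ0 hlift).1.isClosed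
  exact ⟨T, mem_iUnion₂.2 ⟨n, m, hT⟩, hSn.isotopicAlongFlow hφc hφ0 hφadd
    Nat.one_div_pos_of_nat Nat.one_div_pos_of_nat hTn hTc hST⟩

/-- **At most countably many cross-sections up to isotopy.**
Let `M` be a compact metric space with a continuous flow `φ`, and let `f₀ : M → ℝ/ℤ` be
continuous and not homotopic to a constant. Then there is a countable (possibly empty)
family of level-set cross-sections for `f₀` such that every level-set cross-section for
`f₀` is isotopic along the flow to a member of the family. -/
theorem crossSections_upto_isotopy_countable
    {M : Type*} [MetricSpace M] [CompactSpace M]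
    (f₀ : M → AddCircle (1:ℝ)) (hf₀ : Continuous f₀)
    (hnc : ¬ ∃ c : AddCircle (1:ℝ),
      ContinuousMap.Homotopic ⟨f₀, hf₀⟩ (ContinuousMap.const M c))
    (φ : ℝ → M → M)
    (hφc : Continuous fun p : ℝ × M => φ p.1 p.2)
    (hφ0 : ∀ x : M, φ 0 x = x)
    (hφadd : ∀ (s t : ℝ) (x : M), φ (s + t) x = φ s (φ t x))
    (ψ : ℝ → ZCover f₀ → ZCover f₀)
    (hψc : Continuous fun p : ℝ × ZCover f₀ => ψ p.1 p.2)
    (hψ0 : ∀ y : ZCover f₀, ψ 0 y = y)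
    (hψadd : ∀ (s t : ℝ) (y : ZCover f₀), ψ (s + t) y = ψ s (ψ t y))
    (hlift : ∀ (s : ℝ) (y : ZCover f₀), zProj f₀ (ψ s y) = φ s (zProj f₀ y))
    (hdeck : ∀ (s : ℝ) (y : ZCover f₀), ψ s (zDeck f₀ y) = zDeck f₀ (ψ s y))
    :
    ∃ 𝒞 : Set (Set M), 𝒞.Countable ∧ (∀ S ∈ 𝒞, IsLevelSetCS f₀ ψ S) ∧
      ∀ S : Set M, IsLevelSetCS f₀ ψ S → ∃ S' ∈ 𝒞, IsotopicAlongFlow φ S S' :=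
  crossSections_upto_isotopy_countable_general f₀ hf₀ φ hφc hφ0 hφadd ψ hψc hψ0 hlift
end

section
/- Let M be a metric space equipped with a continuous flow φ, and let S ⊆ M be a compact set topologically transverse to φ. Then there exists t > 0 such that for every x ∈ M there is at most one s ∈ (−t, t) with φ_s(x) ∈ S. -/
/-- **Uniform flow-box separation.**
Let `M` be a metric space with a continuous flow `φ` and let `S ⊆ M` be compact and
topologically transverse to `φ`. Then there is `t > 0` such that every orbit meets `S`
at most once during any time interval `(-t, t)`. -/
theorem uniform_flowbox_separation
    {M : Type*} [MetricSpace M]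
    (φ : ℝ → M → M)
    (hφc : Continuous fun p : ℝ × M => φ p.1 p.2)
    (hφ0 : ∀ x : M, φ 0 x = x)
    (hφadd : ∀ (s t : ℝ) (x : M), φ (s + t) x = φ s (φ t x))
    (S : Set M) (hSc : IsCompact S) (hTr : TopTransverse φ S) :
    ∃ t : ℝ, 0 < t ∧ ∀ (x : M) (s s' : ℝ), s ∈ Set.Ioo (-t) t → s' ∈ Set.Ioo (-t) t →
      φ s x ∈ S → φ s' x ∈ S → s = s' := by

  classical
  choose tz htz V hVopen hxV htrans using hTr
  have key : ∀ z (hz : z ∈ S), ∃ δ : ℝ, 0 < δ ∧ δ ≤ tz z hz ∧ ∃ W : Set M,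
      IsOpen W ∧ z ∈ W ∧ W ⊆ V z hz ∧
      ∀ y ∈ W, ∀ s : ℝ, |s| ≤ δ → φ s y ∈ V z hz := by
    intro z hz
    have hopen : IsOpen ((fun p : ℝ × M => φ p.1 p.2) ⁻¹' V z hz) :=
      (hVopen z hz).preimage hφc
    have hmem : ((0:ℝ), z) ∈ (fun p : ℝ × M => φ p.1 p.2) ⁻¹' V z hz := by
      simp [hφ0, hxV z hz]
    obtain ⟨u, v, hu, hv, h0u, hzv, huv⟩ :=
      isOpen_prod_iff.mp hopen 0 z hmem
    obtain ⟨ε, hε, hball⟩ := Metric.isOpen_iff.mp hu 0 h0u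
    refine ⟨min (ε/2) (tz z hz), lt_min (by linarith) (htz z hz),
      min_le_right _ _, v ∩ V z hz, hv.inter (hVopen z hz), ⟨hzv, hxV z hz⟩,
      Set.inter_subset_right, ?_⟩
    intro y hy s hs
    have hsu : s ∈ u := by
      apply hball
      simp only [Metric.mem_ball, Real.dist_eq, sub_zero]
      calc |s| ≤ min (ε/2) (tz z hz) := hs
        _ ≤ ε/2 := min_le_left _ _
        _ < ε := by linarith
    exact huv (Set.mk_mem_prod hsu hy.1)
  choose δ hδpos hδle W hWopen hzW hWV hWflow using key
  obtain ⟨F, hF⟩ := hSc.elim_nhds_subcover' (fun z hz => W z hz)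
    (fun z hz => (hWopen z hz).mem_nhds (hzW z hz))
  by_cases hFne : F.Nonempty
  · set t0 := F.inf' hFne (fun z => δ z.1 z.2) with ht0def
    have ht0pos : 0 < t0 := by
      rw [Finset.lt_inf'_iff]
      exact fun z _ => hδpos z.1 z.2
    refine ⟨t0 / 2, by linarith, ?_⟩
    rintro x s s' ⟨hs1, hs2⟩ ⟨hs1', hs2'⟩ hsS hs'S
    obtain ⟨z, hzF, hyW⟩ : ∃ z ∈ F, φ s x ∈ W z.1 z.2 := by
      have := hF hsS
      simpa using this
    have ht0le : t0 ≤ δ z.1 z.2 := Finset.inf'_le _ hzF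
    have habs : |s' - s| ≤ δ z.1 z.2 := by
      rw [abs_le]; constructor <;> nlinarith
    have heq : φ (s' - s) (φ s x) = φ s' x := by
      rw [← hφadd]; ring_nf
    have hIn : φ (s' - s) (φ s x) ∈ V z.1 z.2 ∩ S := by
      refine ⟨hWflow z.1 z.2 _ hyW _ habs, ?_⟩
      rw [heq]; exact hs'S
    have hIcc : s' - s ∈ Set.Icc (-(tz z.1 z.2)) (tz z.1 z.2) := by
      have := habs.trans (hδle z.1 z.2)
      rw [abs_le] at this
      exact ⟨this.1, this.2⟩
    have := htrans z.1 z.2 (φ s x) ⟨hWV z.1 z.2 hyW, hsS⟩ (s' - s) hIcc hIn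
    linarith
  · refine ⟨1, one_pos, ?_⟩
    intro x s s' _ _ hsS _
    exfalso
    have := hF hsS
    rw [Finset.not_nonempty_iff_eq_empty.mp hFne] at this
    simp at this
end

section
/- Let M be a compact metric space equipped with a continuous flow φ, let f₀ : M → ℝ/ℤ be a continuous map not homotopic to a constant map, and let N, π, T, ψ be as in the covering construction. Let F : N → ℝ be continuous, ℤ-equivariant, and strictly increasing along the flow everywhere: F(ψ_s(y)) < F(ψ_{s′}(y)) for all y ∈ N and all s < s′. Then for every y ∈ N and every c ∈ ℝ there is exactly one s ∈ ℝ with F(ψ_s(y)) = c. Consequently, π(F⁻¹({c})) meets every orbit of φ, i.e. it is a global cross-section. (This is the key step in the paper's proof of Fried's theorem in the general continuous setting.) -/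
/-! The unit-time gain `F ∘ ψ 1 - F` is positive and invariant under the deck transformation, so
its values are all taken on the compact slab `M × [0, 1]` of the cover and it is bounded below by
some `δ > 0`. Hence `s ↦ F (ψ s y)` gains at least `δ` on every unit interval; being continuous and
strictly increasing, it is a bijection `ℝ → ℝ`. -/

theorem Continuous.surjective_of_add_le_add_one {h : ℝ → ℝ} (hc : Continuous h) {δ : ℝ}
    (hδ : 0 < δ) (hstep : ∀ s, h s + δ ≤ h (s + 1)) : Function.Surjective h := by
  have hmono : Monotone fun n : ℤ => h n - n * δ :=
    monotone_int_of_le_succ fun n => by push_cast; linarith [hstep n]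
  intro c
  obtain ⟨n, hn⟩ := exists_nat_ge (|c - h 0| / δ)
  have hnδ : |c - h 0| ≤ n * δ := (div_le_iff₀ hδ).mp hn
  have hlow : h (-n) ≤ c := by
    have := hmono (show (-n : ℤ) ≤ 0 by omega)
    push_cast at this
    linarith [neg_abs_le (c - h 0)]
  have hhigh : c ≤ h n := by
    have := hmono (show (0 : ℤ) ≤ n by omega)
    push_cast at this
    linarith [le_abs_self (c - h 0)]
  exact intermediate_value_univ (-n : ℝ) n hc ⟨hlow, hhigh⟩

theorem IsCompact.exists_pos_forall_le_of_forall_exists {X : Type*} [TopologicalSpace X]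
    {K : Set X} (hK : IsCompact K) {g : X → ℝ} (hg : ContinuousOn g K) (hpos : ∀ x, 0 < g x)
    (hattain : ∀ x, ∃ y ∈ K, g y = g x) : ∃ δ > 0, ∀ x, δ ≤ g x := by
  rcases K.eq_empty_or_nonempty with hKe | hKne
  · refine ⟨1, one_pos, fun x => ?_⟩
    obtain ⟨y, hy, -⟩ := hattain x
    simp [hKe] at hy
  · obtain ⟨y₀, hy₀, hmin⟩ := hK.exists_isMinOn hKne hg
    refine ⟨g y₀, hpos y₀, fun x => ?_⟩
    obtain ⟨y, hy, hyx⟩ := hattain x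
    exact hyx ▸ hmin hy

namespace ZCover

variable {M : Type*} [MetricSpace M] {f₀ : M → AddCircle (1 : ℝ)}

theorem zProj_surjective : Function.Surjective (zProj f₀) := fun x => by
  obtain ⟨t, ht⟩ := QuotientAddGroup.mk_surjective (f₀ x)
  exact ⟨⟨(x, t), ht.symm⟩, rfl⟩

def slab (f₀ : M → AddCircle (1 : ℝ)) : Set (ZCover f₀) := {z | z.val.2 ∈ Set.Icc 0 1}

theorem isCompact_slab [CompactSpace M] (hf₀ : Continuous f₀) : IsCompact (slab f₀) := by
  have hclosed : IsClosed {p : M × ℝ | f₀ p.1 = (p.2 : AddCircle (1 : ℝ))} :=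
    isClosed_eq (hf₀.comp continuous_fst) ((AddCircle.continuous_mk' 1).comp continuous_snd)
  have := hclosed.isClosedEmbedding_subtypeVal.isCompact_preimage
    (isCompact_univ.prod (isCompact_Icc (a := (0 : ℝ)) (b := 1)))
  rwa [Set.univ_prod] at this

theorem eq_of_deck_invariant {α : Type*} {g : ZCover f₀ → α} (hg : ∀ z, g (zDeck f₀ z) = g z)
    (n : ℤ) : ∀ {z w : ZCover f₀}, z.val.1 = w.val.1 → z.val.2 = w.val.2 + n → g z = g w := by
  induction n using Int.induction_on with
  | zero =>
    intro z w h₁ h₂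
    exact congrArg g (Subtype.ext (Prod.ext h₁ (by simpa using h₂)))
  | succ n ih =>
    intro z w h₁ h₂
    rw [← hg w]
    exact ih h₁ (by simp only [zDeck]; push_cast at h₂ ⊢; linarith)
  | pred n ih =>
    intro z w h₁ h₂
    rw [← hg z]
    exact ih h₁ (by simp only [zDeck]; push_cast at h₂ ⊢; linarith)

theorem exists_mem_slab_eq_of_deck_invariant {α : Type*} {g : ZCover f₀ → α}
    (hg : ∀ z, g (zDeck f₀ z) = g z) (z : ZCover f₀) : ∃ w ∈ slab f₀, g w = g z := by
  refine ⟨⟨(z.val.1, Int.fract z.val.2), by simpa using z.prop⟩,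
    ⟨Int.fract_nonneg _, (Int.fract_lt_one _).le⟩, ?_⟩
  symm
  exact eq_of_deck_invariant hg ⌊z.val.2⌋ rfl (Int.fract_add_floor _).symm

theorem exists_pos_le_of_deck_invariant [CompactSpace M] (hf₀ : Continuous f₀)
    {g : ZCover f₀ → ℝ} (hgc : Continuous g) (hg : ∀ z, g (zDeck f₀ z) = g z)
    (hpos : ∀ z, 0 < g z) : ∃ δ > 0, ∀ z, δ ≤ g z :=
  (isCompact_slab hf₀).exists_pos_forall_le_of_forall_exists hgc.continuousOn hpos
    (exists_mem_slab_eq_of_deck_invariant hg)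

end ZCover

theorem levelSet_global_crossSection_general
    {M : Type*} [MetricSpace M] [CompactSpace M]
    (f₀ : M → AddCircle (1:ℝ)) (hf₀ : Continuous f₀)
    (φ : ℝ → M → M)
    (ψ : ℝ → ZCover f₀ → ZCover f₀)
    (hψc : Continuous fun p : ℝ × ZCover f₀ => ψ p.1 p.2)
    (hψ0 : ∀ y : ZCover f₀, ψ 0 y = y)
    (hψadd : ∀ (s t : ℝ) (y : ZCover f₀), ψ (s + t) y = ψ s (ψ t y))
    (hlift : ∀ (s : ℝ) (y : ZCover f₀), zProj f₀ (ψ s y) = φ s (zProj f₀ y))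
    (hdeck : ∀ (s : ℝ) (y : ZCover f₀), ψ s (zDeck f₀ y) = zDeck f₀ (ψ s y))
    (F : ZCover f₀ → ℝ) (hFc : Continuous F)
    (hFeq : ∀ y : ZCover f₀, F (zDeck f₀ y) = F y + 1)
    (hmono : ∀ (y : ZCover f₀) (s s' : ℝ), s < s' → F (ψ s y) < F (ψ s' y)) :
    (∀ (y : ZCover f₀) (c : ℝ), ∃! s : ℝ, F (ψ s y) = c) ∧
      ∀ (c : ℝ) (x : M), ∃ s : ℝ, φ s x ∈ zProj f₀ '' (F ⁻¹' {c}) := by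
  obtain ⟨δ, hδ, hgain⟩ : ∃ δ > 0, ∀ z, δ ≤ F (ψ 1 z) - F z := by
    refine ZCover.exists_pos_le_of_deck_invariant hf₀
      ((hFc.comp (hψc.comp (continuous_const.prodMk continuous_id))).sub hFc)
      (fun z => by simp only [hdeck, hFeq]; ring) (fun z => ?_)
    simpa [hψ0] using hmono z 0 1 one_pos
  have hbij : ∀ y, Function.Bijective fun s => F (ψ s y) := by
    intro y
    have hcont : Continuous fun s => F (ψ s y) :=
      hFc.comp (hψc.comp (continuous_id.prodMk continuous_const))
    refine ⟨(StrictMono.injective fun s s' => hmono y s s'),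
      hcont.surjective_of_add_le_add_one hδ fun s => ?_⟩
    rw [add_comm s 1, hψadd]
    linarith [hgain (ψ s y)]
  refine ⟨fun y => (hbij y).existsUnique, fun c x => ?_⟩
  obtain ⟨y, rfl⟩ := ZCover.zProj_surjective (f₀ := f₀) x
  obtain ⟨s, hs⟩ := (hbij y).surjective c
  exact ⟨s, ψ s y, hs, hlift s y⟩

/-- **Level sets of everywhere increasing equivariant functions are global cross-sections.**
Let `M` be a compact metric space with a continuous flow `φ`, `f₀ : M → ℝ/ℤ` continuous
and not homotopic to a constant, and `F` a continuous ℤ-equivariant function on the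
ℤ-cover which is strictly increasing along the lifted flow everywhere. Then for every
`y` in the cover and every `c ∈ ℝ` there is exactly one `s` with `F (ψ s y) = c`;
consequently, for every `c`, the projected level set `π (F⁻¹ {c})` meets every orbit. -/
theorem levelSet_global_crossSection
    {M : Type*} [MetricSpace M] [CompactSpace M]
    (f₀ : M → AddCircle (1:ℝ)) (hf₀ : Continuous f₀)
    (hnc : ¬ ∃ c : AddCircle (1:ℝ),
      ContinuousMap.Homotopic ⟨f₀, hf₀⟩ (ContinuousMap.const M c))
    (φ : ℝ → M → M)
    (hφc : Continuous fun p : ℝ × M => φ p.1 p.2)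
    (hφ0 : ∀ x : M, φ 0 x = x)
    (hφadd : ∀ (s t : ℝ) (x : M), φ (s + t) x = φ s (φ t x))
    (ψ : ℝ → ZCover f₀ → ZCover f₀)
    (hψc : Continuous fun p : ℝ × ZCover f₀ => ψ p.1 p.2)
    (hψ0 : ∀ y : ZCover f₀, ψ 0 y = y)
    (hψadd : ∀ (s t : ℝ) (y : ZCover f₀), ψ (s + t) y = ψ s (ψ t y))
    (hlift : ∀ (s : ℝ) (y : ZCover f₀), zProj f₀ (ψ s y) = φ s (zProj f₀ y))
    (hdeck : ∀ (s : ℝ) (y : ZCover f₀), ψ s (zDeck f₀ y) = zDeck f₀ (ψ s y))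
    (F : ZCover f₀ → ℝ) (hFc : Continuous F)
    (hFeq : ∀ y : ZCover f₀, F (zDeck f₀ y) = F y + 1)
    (hmono : ∀ (y : ZCover f₀) (s s' : ℝ), s < s' → F (ψ s y) < F (ψ s' y)) :
    (∀ (y : ZCover f₀) (c : ℝ), ∃! s : ℝ, F (ψ s y) = c) ∧
      ∀ (c : ℝ) (x : M), ∃ s : ℝ, φ s x ∈ zProj f₀ '' (F ⁻¹' {c}) :=
  levelSet_global_crossSection_general f₀ hf₀ φ ψ hψc hψ0 hψadd hlift hdeck F hFc hFeq hmono
end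

section
/- Let (X, ≤) be a preordered set, let T : X → X be a bijection with x ≤ y ⟺ T(x) ≤ T(y), whose induced ℤ-action on X has only finitely many orbits, and let n ≥ 1 be an integer. Let 𝓘 be the set of maps f : X → ℤ such that x ≤ y implies f(x) ≤ f(y) and f(T(x)) = f(x) + n for all x, and identify two such maps when they differ by an additive integer constant. If 𝓘 is nonempty, then 𝓘 (up to additive constants) is finite if and only if for all x, y ∈ X there exists k ∈ ℤ with x ≤ T^k(y). -/
/-!
A labeling is determined by its values on a set of orbit representatives, since equivariance gives
`f (T^k x) = f x + k n`. If every point reaches every orbit, then a labeling normalized by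
`f x₀ = 0` is squeezed on each representative `r` between `-k n` and `l n`, where
`x₀ ≤ T^k r` and `r ≤ T^l x₀`; with finitely many orbits this leaves finitely many labelings.
Conversely, if `x` reaches no point of the orbit of `y`, the points that reach no point of that
orbit form a `T`-invariant upper set containing `x` but not `y`, and adding `m` times its
indicator to a labeling gives labelings that are pairwise inequivalent for `m : ℕ`.
-/

open Set

section Orbits

variable {X : Type*}

theorem apply_zpow_apply_of_apply_eq_add {G : Type*} [AddCommGroup G] {T : Equiv.Perm X}
    {f : X → G} {n : G} (hf : ∀ x, f (T x) = f x + n) (k : ℤ) (x : X) :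
    f ((T ^ k) x) = f x + k • n := by
  induction k using Int.induction_on generalizing x with
  | zero => simp
  | succ k ih =>
    rw [zpow_add_one, Equiv.Perm.mul_apply, ih, hf, add_zsmul, one_zsmul]
    abel
  | pred k ih =>
    have hinv : f (T⁻¹ x) = f x - n := by
      rw [eq_sub_iff_add_eq, ← hf]
      simp
    rw [zpow_sub_one, Equiv.Perm.mul_apply, ih, hinv, sub_zsmul, one_zsmul]
    abel

def zpowOrbit (T : Equiv.Perm X) (x : X) : Set X := {y | ∃ k : ℤ, y = (T ^ k) x}

theorem exists_finite_transversal_of_finite_range_zpowOrbit {T : Equiv.Perm X}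
    (h : (range (zpowOrbit T)).Finite) :
    ∃ R : Set X, R.Finite ∧ ∀ x, ∃ r ∈ R, ∃ k : ℤ, x = (T ^ k) r := by
  have := h.to_subtype
  refine ⟨range (rangeSplitting (zpowOrbit T)), finite_range _, fun x => ?_⟩
  refine ⟨_, mem_range_self ⟨zpowOrbit T x, mem_range_self x⟩, ?_⟩
  change x ∈ zpowOrbit T _
  rw [apply_rangeSplitting (zpowOrbit T)]
  exact ⟨0, by simp⟩

theorem eq_of_eqOn_of_apply_eq_add {G : Type*} [AddCommGroup G] {T : Equiv.Perm X}
    {f g : X → G} {n : G} {R : Set X} (hf : ∀ x, f (T x) = f x + n)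
    (hg : ∀ x, g (T x) = g x + n) (hR : ∀ x, ∃ r ∈ R, ∃ k : ℤ, x = (T ^ k) r)
    (hfg : EqOn f g R) : f = g := by
  funext x
  obtain ⟨r, hr, k, rfl⟩ := hR x
  rw [apply_zpow_apply_of_apply_eq_add hf, apply_zpow_apply_of_apply_eq_add hg, hfg hr]

end Orbits

theorem IsUpperSet.monotone_indicator_const {α M : Type*} [Preorder α] [Preorder M] [Zero M]
    {U : Set α} (hU : IsUpperSet U) {c : M} (hc : 0 ≤ c) : Monotone (U.indicator fun _ => c) := by
  intro a b hab
  by_cases ha : a ∈ U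
  · simp [ha, hU hab ha]
  · by_cases hb : b ∈ U <;> simp [ha, hb, hc]

section Labelings

variable {X : Type*}

def constShiftClass {G : Type*} [Add G] (f : X → G) : Set (X → G) :=
  {g | ∃ c : G, ∀ x, g x = f x + c}

theorem exists_eq_add_of_constShiftClass_eq {G : Type*} [AddZeroClass G] {f g : X → G}
    (h : constShiftClass f = constShiftClass g) : ∃ c : G, ∀ x, f x = g x + c := by
  have hf : f ∈ constShiftClass f := ⟨0, fun x => (add_zero _).symm⟩
  rwa [h] at hf

theorem constShiftClass_sub_const {G : Type*} [AddCommGroup G] (f : X → G) (c : G) :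
    constShiftClass (fun x => f x - c) = constShiftClass f := by
  ext g
  constructor
  · rintro ⟨d, hd⟩
    exact ⟨d - c, fun x => by simp only [hd]; abel⟩
  · rintro ⟨d, hd⟩
    exact ⟨d + c, fun x => by simp only [hd]; abel⟩

variable [Preorder X] {T : Equiv.Perm X} {n : ℤ} {f : X → ℤ}

def IsEquivariantLabeling (T : Equiv.Perm X) (n : ℤ) (f : X → ℤ) : Prop :=
  Monotone f ∧ ∀ x, f (T x) = f x + n

namespace IsEquivariantLabeling

theorem sub_const (hf : IsEquivariantLabeling T n f) (c : ℤ) :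
    IsEquivariantLabeling T n fun x => f x - c :=
  ⟨fun _ _ hab => sub_le_sub_right (hf.1 hab) c, fun x => by simp only [hf.2]; ring⟩

theorem add_indicator_const (hf : IsEquivariantLabeling T n f) {U : Set X} (hU : IsUpperSet U)
    (hTU : T ⁻¹' U = U) {m : ℤ} (hm : 0 ≤ m) :
    IsEquivariantLabeling T n (f + U.indicator fun _ => m) := by
  refine ⟨hf.1.add (hU.monotone_indicator_const hm), fun x => ?_⟩
  rw [Pi.add_apply, Pi.add_apply, hf.2, ← indicator_comp_right, hTU, Function.comp_def]
  ring

theorem mem_Icc_of_le_of_le (hf : IsEquivariantLabeling T n f) {x₀ r : X} (h₀ : f x₀ = 0)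
    {k l : ℤ} (hk : x₀ ≤ (T ^ k) r) (hl : r ≤ (T ^ l) x₀) : f r ∈ Icc (-(k * n)) (l * n) := by
  have hk' := hf.1 hk
  have hl' := hf.1 hl
  rw [apply_zpow_apply_of_apply_eq_add hf.2, smul_eq_mul] at hk' hl'
  constructor <;> linarith

end IsEquivariantLabeling

theorem finite_normalized_equivariantLabelings {R : Set X} (hR : R.Finite)
    (hRT : ∀ x, ∃ r ∈ R, ∃ k : ℤ, x = (T ^ k) r) (hconn : ∀ x y : X, ∃ k : ℤ, x ≤ (T ^ k) y)
    (x₀ : X) : {f | IsEquivariantLabeling T n f ∧ f x₀ = 0}.Finite := by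
  choose k hk using hconn x₀
  choose l hl using fun r => hconn r x₀
  have := hR.to_subtype
  have hbox : {φ : R → ℤ | ∀ r : R, φ r ∈ Icc (-(k r * n)) (l r * n)}.Finite :=
    Finite.pi' fun _ => finite_Icc _ _
  refine Finite.of_finite_image (f := fun f (r : R) => f r) (hbox.subset ?_) ?_
  · rintro _ ⟨f, ⟨hf, h₀⟩, rfl⟩ r
    exact hf.mem_Icc_of_le_of_le h₀ (hk r) (hl r)
  · intro f hf g hg hfg
    exact eq_of_eqOn_of_apply_eq_add hf.1.2 hg.1.2 hRT fun r hr => congrFun hfg ⟨r, hr⟩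

theorem finite_constShiftClass_image_of_forall_exists_le
    (horb : (range (zpowOrbit T)).Finite) (hconn : ∀ x y : X, ∃ k : ℤ, x ≤ (T ^ k) y) :
    (constShiftClass '' {f | IsEquivariantLabeling T n f}).Finite := by
  rcases isEmpty_or_nonempty X with hX | ⟨⟨x₀⟩⟩
  · exact toFinite _
  obtain ⟨R, hR, hRT⟩ := exists_finite_transversal_of_finite_range_zpowOrbit horb
  refine ((finite_normalized_equivariantLabelings (n := n) hR hRT hconn x₀).image
    constShiftClass).subset ?_
  rintro _ ⟨f, hf, rfl⟩
  exact ⟨fun x => f x - f x₀, ⟨hf.sub_const _, sub_self _⟩, constShiftClass_sub_const f _⟩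

theorem infinite_constShiftClass_image_of_forall_not_le (hT : ∀ x y : X, x ≤ y ↔ T x ≤ T y)
    (hf : IsEquivariantLabeling T n f) {x y : X} (hxy : ∀ k : ℤ, ¬x ≤ (T ^ k) y) :
    (constShiftClass '' {f | IsEquivariantLabeling T n f}).Infinite := by
  set U := {z : X | ∀ k : ℤ, ¬z ≤ (T ^ k) y}
  have hU : IsUpperSet U := fun a b hab ha k hb => ha k (hab.trans hb)
  have hTU : T ⁻¹' U = U := by
    ext z
    constructor
    · intro h k hk
      exact h (1 + k) (by rwa [zpow_one_add, Equiv.Perm.mul_apply, ← hT])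
    · intro h k hk
      rw [← add_sub_cancel 1 k, zpow_one_add, Equiv.Perm.mul_apply, ← hT] at hk
      exact h _ hk
  have hyU : y ∉ U := fun h => h 0 le_rfl
  set g : ℕ → X → ℤ := fun m => f + U.indicator fun _ => (m : ℤ)
  have hg : ∀ m, IsEquivariantLabeling T n (g m) := fun m =>
    hf.add_indicator_const hU hTU (Int.natCast_nonneg m)
  refine infinite_of_injective_forall_mem (f := fun m => constShiftClass (g m))
    (fun m m' hmm' => ?_) fun m => ⟨g m, hg m, rfl⟩
  obtain ⟨c, hc⟩ := exists_eq_add_of_constShiftClass_eq hmm'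
  have hcy := hc y
  have hcx := hc x
  simp only [g, Pi.add_apply, indicator_of_notMem hyU, indicator_of_mem (show x ∈ U from hxy)]
    at hcy hcx
  omega

end Labelings

theorem equivariant_monotone_labelings_finite_iff_general
    {X : Type*} [Preorder X] (T : Equiv.Perm X)
    (hT : ∀ x y : X, x ≤ y ↔ T x ≤ T y)
    (horb : {O : Set X | ∃ x : X, O = {y : X | ∃ k : ℤ, y = (T ^ k) x}}.Finite)
    (n : ℕ)
    (hne : {f : X → ℤ | (∀ ⦃x y : X⦄, x ≤ y → f x ≤ f y) ∧
      ∀ x : X, f (T x) = f x + (n : ℤ)}.Nonempty) :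
    ({C : Set (X → ℤ) | ∃ f : X → ℤ,
        ((∀ ⦃x y : X⦄, x ≤ y → f x ≤ f y) ∧ ∀ x : X, f (T x) = f x + (n : ℤ)) ∧
        C = {g : X → ℤ | ∃ c : ℤ, ∀ x : X, g x = f x + c}}.Finite ↔
      ∀ x y : X, ∃ k : ℤ, x ≤ (T ^ k) y) := by
  have hclasses : {C : Set (X → ℤ) | ∃ f : X → ℤ,
      ((∀ ⦃x y : X⦄, x ≤ y → f x ≤ f y) ∧ ∀ x : X, f (T x) = f x + (n : ℤ)) ∧
      C = {g : X → ℤ | ∃ c : ℤ, ∀ x : X, g x = f x + c}} =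
      constShiftClass '' {f | IsEquivariantLabeling T n f} := by
    ext C
    exact exists_congr fun f => and_congr_right fun _ => eq_comm
  have horb' : (range (zpowOrbit T)).Finite := by
    convert horb using 1
    ext O
    exact exists_congr fun x => eq_comm
  rw [hclasses]
  refine ⟨fun hfin x y => ?_, finite_constShiftClass_image_of_forall_exists_le horb'⟩
  by_contra! hxy
  obtain ⟨f, hf⟩ := hne
  exact infinite_constShiftClass_image_of_forall_not_le hT hf hxy hfin

/-- **Finiteness of equivariant monotone integer labelings.**
Let `X` be a preordered set, `T : X ≃ X` an order automorphism whose induced ℤ-action has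
finitely many orbits, and `n ≥ 1`. Consider the set `𝓘` of maps `f : X → ℤ` that are
monotone and satisfy `f (T x) = f x + n`, up to additive integer constants. If `𝓘` is
nonempty, then `𝓘` is finite (up to additive constants) if and only if for all `x, y ∈ X`
there is `k ∈ ℤ` with `x ≤ T^k y`. -/
theorem equivariant_monotone_labelings_finite_iff
    {X : Type*} [Preorder X] (T : Equiv.Perm X)
    (hT : ∀ x y : X, x ≤ y ↔ T x ≤ T y)
    (horb : {O : Set X | ∃ x : X, O = {y : X | ∃ k : ℤ, y = (T ^ k) x}}.Finite)
    (n : ℕ) (hn : 1 ≤ n)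
    (hne : {f : X → ℤ | (∀ ⦃x y : X⦄, x ≤ y → f x ≤ f y) ∧
      ∀ x : X, f (T x) = f x + (n : ℤ)}.Nonempty) :
    ({C : Set (X → ℤ) | ∃ f : X → ℤ,
        ((∀ ⦃x y : X⦄, x ≤ y → f x ≤ f y) ∧ ∀ x : X, f (T x) = f x + (n : ℤ)) ∧
        C = {g : X → ℤ | ∃ c : ℤ, ∀ x : X, g x = f x + c}}.Finite ↔
      ∀ x y : X, ∃ k : ℤ, x ≤ (T ^ k) y) :=
  equivariant_monotone_labelings_finite_iff_general T hT horb n hne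
end

section
/- Let M be a path-connected topological space, K ⊆ M a nonempty compact set, and f : M → ℝ/ℤ a continuous map. Let I and J be two distinct connected components of (ℝ/ℤ) ∖ f(K), and suppose the frontier of I in ℝ/ℤ is {p, q} with p ≠ q and that there are points k₁, k₂ ∈ K with f(k₁) = p and f(k₂) = q. For an open arc X ∈ {I, J}, let π_X : ℝ/ℤ → ℝ/ℤ denote a continuous degree-one map that sends (ℝ/ℤ) ∖ X to 0 and maps X homeomorphically, preserving orientation, onto (ℝ/ℤ) ∖ {0}. Then there is no homotopy H : [0,1] × M → ℝ/ℤ from π_I ∘ f to π_J ∘ f satisfying H(t, x) = 0 for all t ∈ [0,1] and all x ∈ K. (This is the paper's lemma that the retractions of a Lyapunov circle map to two distinct complementary intervals of the image of the recurrent set are non-homotopic relative to sending the recurrent set to 0.) -/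
/-!
Join `k₁` to `k₂` by a path `γ`, lift `f ∘ γ` to a path in `ℝ` starting at a lift `a` of `p`,
and let `b ∈ (a, a + 1)` lift `q`. If `g_X` is the monotone degree-one lift of `π_X`, the lift of
`π_X ∘ f ∘ γ` rises by `g_X b - g_X a` plus an integer independent of `X`, and a homotopy
relative to the endpoints would make this rise the same for `I` and `J`. But `g_X b - g_X a` is
`1` or `0` according as `X` meets the arc `(a, b)` or `(b, a + 1)`; both arcs avoid
`frontier I = {p, q}`, so the one that `I` meets lies inside `I` and is missed by `J`.
-/

/-- `π'` is the standard degree-one retraction of the circle `ℝ/ℤ` onto the open arc `X`: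
it is continuous, admits a monotone lift `g : ℝ → ℝ` with `g (t+1) = g t + 1`
(so `π'` has degree one), sends the complement of `X` to `0`, and maps `X` bijectively
(hence, preserving orientation) onto `(ℝ/ℤ) ∖ {0}`. -/
def IsArcRetraction (X : Set (AddCircle (1:ℝ)))
    (π' : AddCircle (1:ℝ) → AddCircle (1:ℝ)) : Prop :=
  Continuous π' ∧
  (∃ g : ℝ → ℝ, Continuous g ∧ Monotone g ∧ (∀ t : ℝ, g (t + 1) = g t + 1) ∧
    ∀ t : ℝ, π' ((t : ℝ) : AddCircle (1:ℝ)) = ((g t : ℝ) : AddCircle (1:ℝ))) ∧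
  (∀ z : AddCircle (1:ℝ), z ∉ X → π' z = 0) ∧
  Set.BijOn π' X {0}ᶜ

open Set

local notation "𝕋" => AddCircle (1 : ℝ)

theorem disjoint_connectedComponentIn_of_ne {α : Type*} [TopologicalSpace α] {F : Set α}
    {x y : α} (h : connectedComponentIn F x ≠ connectedComponentIn F y) :
    Disjoint (connectedComponentIn F x) (connectedComponentIn F y) :=
  Set.disjoint_left.2 fun _ hx hy =>
    h ((connectedComponentIn_eq hx).trans (connectedComponentIn_eq hy).symm)

theorem ContinuousMap.homotopicRel_of_continuousOn {X Y : Type*} [TopologicalSpace X]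
    [TopologicalSpace Y] {g₀ g₁ : C(X, Y)} {S : Set X} {H : ℝ → X → Y}
    (hH : ContinuousOn (fun z : ℝ × X => H z.1 z.2) (Icc 0 1 ×ˢ univ))
    (h₀ : ∀ x, H 0 x = g₀ x) (h₁ : ∀ x, H 1 x = g₁ x)
    (hS : ∀ t ∈ Icc (0 : ℝ) 1, ∀ x ∈ S, H t x = H 0 x) :
    g₀.HomotopicRel g₁ S :=
  ⟨{ toFun := fun z => H z.1 z.2
     continuous_toFun := hH.comp_continuous
       ((continuous_subtype_val.comp continuous_fst).prodMk continuous_snd)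
       fun z => ⟨z.1.2, trivial⟩
     map_zero_left := h₀
     map_one_left := h₁
     prop' := fun t x hx => (hS t t.2 x hx).trans (h₀ x) }⟩

namespace AddCircle

theorem exists_mem_Ioo_coe_eq {a : ℝ} {q : 𝕋} (hq : (a : 𝕋) ≠ q) :
    ∃ b ∈ Ioo a (a + 1), (b : 𝕋) = q := by
  obtain ⟨hab, hba⟩ := (equivIco 1 a q).2
  refine ⟨equivIco 1 a q, ⟨hab.lt_of_ne fun h => hq ?_, hba⟩, coe_equivIco⟩
  rw [h, coe_equivIco]

theorem coe_ne_coe_of_mem_Ioo {u v t : ℝ} (ht : t ∈ Ioo u v) (hvu : v ≤ u + 1) :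
    (t : 𝕋) ≠ u ∧ (t : 𝕋) ≠ v :=
  ⟨fun h => ht.1.ne' ((coe_eq_coe_iff_of_mem_Ico (a := u) ⟨ht.1.le, by linarith [ht.2]⟩
      ⟨le_rfl, by linarith⟩).1 h),
    fun h => ht.2.ne ((coe_eq_coe_iff_of_mem_Ico (a := t) ⟨le_rfl, by linarith⟩
      ⟨ht.2.le, by linarith [ht.1]⟩).1 h)⟩

theorem image_coe_Ioo_subset {X : Set 𝕋} (hX : IsOpen X) {u v : ℝ} (hvu : v ≤ u + 1)
    (hfr : frontier X ⊆ {(u : 𝕋), (v : 𝕋)}) (hmeet : ∃ t ∈ Ioo u v, (t : 𝕋) ∈ X) :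
    ((↑) : ℝ → 𝕋) '' Ioo u v ⊆ X := by
  obtain ⟨t, ht, htX⟩ := hmeet
  refine (isPreconnected_Ioo.image _ (AddCircle.continuous_mk' 1).continuousOn
    ).subset_of_closure_inter_subset hX ⟨_, mem_image_of_mem _ ht, htX⟩ ?_
  rintro _ ⟨hcl, r, hr, rfl⟩
  by_contra hrX
  have hfr' : (r : 𝕋) ∈ frontier X := ⟨hcl, by rwa [hX.interior_eq]⟩
  obtain ⟨hru, hrv⟩ := coe_ne_coe_of_mem_Ioo hr hvu
  rcases hfr hfr' with h | h
  exacts [hru h, hrv h]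

theorem sub_eq_sub_of_homotopicRel {γ₀ γ₁ : C(unitInterval, 𝕋)}
    (h : γ₀.HomotopicRel γ₁ {0, 1}) {Γ₀ Γ₁ : C(unitInterval, ℝ)} (hΓ₀ : ∀ s, γ₀ s = Γ₀ s)
    (hΓ₁ : ∀ s, γ₁ s = Γ₁ s) :
    Γ₀ 1 - Γ₀ 0 = Γ₁ 1 - Γ₁ 0 := by
  have cov := isCoveringMap_coe (1 : ℝ)
  have h₀ : γ₀ 0 = (Γ₀ 0 : 𝕋) := hΓ₀ 0
  have h₁ : γ₁ 0 = (Γ₀ 0 : 𝕋) := (h.fst_eq_snd (.inl rfl)).symm.trans h₀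
  have lift₀ : Γ₀ = cov.liftPath γ₀ _ h₀ :=
    (cov.eq_liftPath_iff' h₀).2 ⟨funext fun s => (hΓ₀ s).symm, rfl⟩
  have lift₁ : Γ₁ + .const _ (Γ₀ 0 - Γ₁ 0) = cov.liftPath γ₁ _ h₁ := by
    refine (cov.eq_liftPath_iff' h₁).2 ⟨funext fun s => ?_, by simp⟩
    simp [hΓ₁, ← h₀, h.fst_eq_snd (.inl rfl)]
  have := cov.liftPath_apply_one_eq_of_homotopicRel h _ h₀ h₁
  rw [← lift₀, ← lift₁] at this
  simp only [ContinuousMap.add_apply, ContinuousMap.const_apply] at this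
  linarith

theorem sub_eq_sub_of_homotopy {X : Type*} [TopologicalSpace X] {x y : X} (γ : Path x y)
    {H : ℝ → X → 𝕋} (hH : ContinuousOn (fun z : ℝ × X => H z.1 z.2) (Icc 0 1 ×ˢ univ))
    (hx : ∀ t ∈ Icc (0 : ℝ) 1, H t x = H 0 x) (hy : ∀ t ∈ Icc (0 : ℝ) 1, H t y = H 0 y)
    {Γ₀ Γ₁ : C(unitInterval, ℝ)} (hΓ₀ : ∀ s, H 0 (γ s) = Γ₀ s) (hΓ₁ : ∀ s, H 1 (γ s) = Γ₁ s) :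
    Γ₀ 1 - Γ₀ 0 = Γ₁ 1 - Γ₁ 0 := by
  let mk : C(ℝ, 𝕋) := ⟨(↑), AddCircle.continuous_mk' 1⟩
  refine sub_eq_sub_of_homotopicRel (γ₀ := mk.comp Γ₀) (γ₁ := mk.comp Γ₁) ?_ (fun _ => rfl)
    (fun _ => rfl)
  refine ContinuousMap.homotopicRel_of_continuousOn (H := fun t s => H t (γ s))
    (hH.comp (continuous_fst.prodMk (γ.continuous.comp continuous_snd)).continuousOn
      fun _ hz => ⟨hz.1, trivial⟩) hΓ₀ hΓ₁ ?_
  rintro t ht s (rfl | rfl)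
  · simpa using hx t ht
  · simpa using hy t ht

end AddCircle

theorem CircleDeg1Lift.map_sub_map_of_coe_eq (g : CircleDeg1Lift) {x y : ℝ}
    (h : (x : 𝕋) = y) : g x - g y = x - y := by
  obtain ⟨n, hn⟩ := (AddCircle.coe_eq_zero_iff (p := (1 : ℝ))).1
    (by rw [AddCircle.coe_sub, h, sub_self] : ((x - y : ℝ) : 𝕋) = 0)
  rw [zsmul_one] at hn
  rw [show x = y + n by linarith, g.map_add_int]
  ring

namespace IsArcRetraction

variable {X : Set 𝕋} {π : 𝕋 → 𝕋}

theorem mem_iff (h : IsArcRetraction X π) {z : 𝕋} : z ∈ X ↔ π z ≠ 0 :=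
  ⟨fun hz => h.2.2.2.mapsTo hz, fun hz => by_contra fun hzX => hz (h.2.2.1 z hzX)⟩

theorem isOpen (h : IsArcRetraction X π) : IsOpen X := by
  have : X = π ⁻¹' {0}ᶜ := Set.ext fun _ => h.mem_iff
  exact this ▸ isOpen_compl_singleton.preimage h.1

theorem exists_circleDeg1Lift (h : IsArcRetraction X π) :
    ∃ g : CircleDeg1Lift, Continuous g ∧ ∀ t : ℝ, π t = g t := by
  obtain ⟨g, hgc, hgm, hg1, hπg⟩ := h.2.1
  exact ⟨⟨⟨g, hgm⟩, hg1⟩, hgc, hπg⟩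

theorem exists_coe_mem_Ioo (h : IsArcRetraction X π) {g : ℝ → ℝ} (hg : Continuous g)
    (hπg : ∀ t : ℝ, π t = g t) {u v : ℝ} (huv : u ≤ v) (hu : (g u : 𝕋) = 0)
    (hv : (g v : 𝕋) = 0) (hlt : g u < g v) :
    ∃ t ∈ Ioo u v, (t : 𝕋) ∈ X := by
  obtain ⟨n, hn⟩ := (AddCircle.coe_eq_zero_iff (p := (1 : ℝ))).1
    (by rw [AddCircle.coe_sub, hu, hv, sub_zero] : ((g v - g u : ℝ) : 𝕋) = 0)
  rw [zsmul_one] at hn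
  have hn1 : (1 : ℝ) ≤ n := by
    exact_mod_cast (show (0 : ℤ) < n by exact_mod_cast hn ▸ sub_pos.2 hlt)
  obtain ⟨t, ht, hgt⟩ := intermediate_value_Ioo huv hg.continuousOn
    (⟨by linarith, by linarith⟩ : g u + 1 / 2 ∈ Ioo (g u) (g v))
  refine ⟨t, ht, h.mem_iff.2 ?_⟩
  rw [hπg, hgt, AddCircle.coe_add, hu, zero_add, Ne,
    AddCircle.coe_eq_zero_iff_of_mem_Ico ⟨by norm_num, by norm_num⟩]
  norm_num

theorem exists_coe_mem_of_lift (h : IsArcRetraction X π) {g : CircleDeg1Lift}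
    (hg : Continuous g) (hπg : ∀ t : ℝ, π t = g t) {a b : ℝ} (hab : a ≤ b) (hba : b ≤ a + 1)
    (ha : (a : 𝕋) ∉ X) (hb : (b : 𝕋) ∉ X) :
    (g a < g b → ∃ t ∈ Ioo a b, (t : 𝕋) ∈ X) ∧
      (g b ≤ g a → ∃ t ∈ Ioo b (a + 1), (t : 𝕋) ∈ X) := by
  have hga : (g a : 𝕋) = 0 := hπg a ▸ h.2.2.1 _ ha
  have hgb : (g b : 𝕋) = 0 := hπg b ▸ h.2.2.1 _ hb
  refine ⟨h.exists_coe_mem_Ioo hg hπg hab hga hgb, fun hle => ?_⟩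
  refine h.exists_coe_mem_Ioo hg hπg hba hgb ?_ ?_
  · rw [g.map_add_one, AddCircle.coe_add_period, hga]
  · rw [g.map_add_one]; linarith

end IsArcRetraction

theorem IsArcRetraction.lift_sub_ne_of_frontier_eq {I J : Set 𝕋} {πI πJ : 𝕋 → 𝕋}
    (hπI : IsArcRetraction I πI) (hπJ : IsArcRetraction J πJ) {gI gJ : CircleDeg1Lift}
    (hgIc : Continuous gI) (hgJc : Continuous gJ) (hgI : ∀ t : ℝ, πI t = gI t)
    (hgJ : ∀ t : ℝ, πJ t = gJ t) (hIJ : Disjoint I J) {a b : ℝ} (hab : a < b)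
    (hba : b < a + 1) (hfr : frontier I = {(a : 𝕋), (b : 𝕋)}) (haJ : (a : 𝕋) ∉ J)
    (hbJ : (b : 𝕋) ∉ J) :
    gI b - gI a ≠ gJ b - gJ a := by
  intro hdeg
  have hIo := hπI.isOpen
  have hfrI : ∀ z ∈ frontier I, z ∉ I := fun z hz => (hIo.frontier_eq ▸ hz).2
  have hnot_both : ∀ u v : ℝ, v ≤ u + 1 → frontier I ⊆ {(u : 𝕋), (v : 𝕋)} →
      (∃ t ∈ Ioo u v, (t : 𝕋) ∈ I) → ¬ ∃ t ∈ Ioo u v, (t : 𝕋) ∈ J := by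
    rintro u v hvu hfr' hmeet ⟨t, ht, htJ⟩
    exact hIJ.ne_of_mem (AddCircle.image_coe_Ioo_subset hIo hvu hfr' hmeet ⟨t, ht, rfl⟩) htJ rfl
  obtain ⟨hIab, hIba⟩ := hπI.exists_coe_mem_of_lift hgIc hgI hab.le hba.le
    (hfrI _ (by simp [hfr])) (hfrI _ (by simp [hfr]))
  obtain ⟨hJab, hJba⟩ := hπJ.exists_coe_mem_of_lift hgJc hgJ hab.le hba.le haJ hbJ
  rcases lt_or_ge (gI a) (gI b) with hlt | hle
  · exact hnot_both a b hba.le hfr.subset (hIab hlt) (hJab (by linarith))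
  · refine hnot_both b (a + 1) (by linarith) ?_ (hIba hle) (hJba (by linarith))
    rw [hfr, AddCircle.coe_add_period, pair_comm]

theorem arcRetractions_not_homotopic_rel_general
    {M : Type*} [TopologicalSpace M] [PathConnectedSpace M]
    (K : Set M)
    (f : M → AddCircle (1:ℝ)) (hf : Continuous f)
    (I J : Set (AddCircle (1:ℝ)))
    (hI : ∃ z ∈ (f '' K)ᶜ, I = connectedComponentIn (f '' K)ᶜ z)
    (hJ : ∃ z ∈ (f '' K)ᶜ, J = connectedComponentIn (f '' K)ᶜ z)
    (hIJ : I ≠ J)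
    (p q : AddCircle (1:ℝ)) (hpq : p ≠ q) (hfr : frontier I = {p, q})
    (k₁ k₂ : M) (hk₁ : k₁ ∈ K) (hk₂ : k₂ ∈ K) (hfk₁ : f k₁ = p) (hfk₂ : f k₂ = q)
    (πI πJ : AddCircle (1:ℝ) → AddCircle (1:ℝ))
    (hπI : IsArcRetraction I πI) (hπJ : IsArcRetraction J πJ) :
    ¬ ∃ H : ℝ → M → AddCircle (1:ℝ),
        ContinuousOn (fun z : ℝ × M => H z.1 z.2) (Set.Icc (0:ℝ) 1 ×ˢ Set.univ) ∧
        (∀ x : M, H 0 x = πI (f x)) ∧ (∀ x : M, H 1 x = πJ (f x)) ∧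
        ∀ t ∈ Set.Icc (0:ℝ) 1, ∀ x ∈ K, H t x = 0 := by
  rintro ⟨H, hH, hH₀, hH₁, hHK⟩
  obtain ⟨gI, hgIc, hgI⟩ := hπI.exists_circleDeg1Lift
  obtain ⟨gJ, hgJc, hgJ⟩ := hπJ.exists_circleDeg1Lift
  obtain ⟨a, rfl⟩ := QuotientAddGroup.mk_surjective p
  obtain ⟨b, ⟨hab, hba⟩, rfl⟩ := AddCircle.exists_mem_Ioo_coe_eq hpq
  obtain ⟨zI, -, rfl⟩ := hI
  obtain ⟨zJ, -, rfl⟩ := hJ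
  have hJK : ∀ {x}, x ∈ K → f x ∉ connectedComponentIn (f '' K)ᶜ zJ :=
    fun hx hJ => connectedComponentIn_subset _ _ hJ (mem_image_of_mem f hx)
  let γ := PathConnectedSpace.somePath k₁ k₂
  obtain ⟨c, hc, hc₀⟩ := (AddCircle.isCoveringMap_coe (1 : ℝ)).exists_path_lifts
    ((ContinuousMap.mk f hf).comp γ.toContinuousMap) a (by simp [hfk₁])
  have hcγ : ∀ s, (c s : 𝕋) = f (γ s) := congrFun hc
  have hKfix : ∀ {x}, x ∈ K → ∀ t ∈ Icc (0 : ℝ) 1, H t x = H 0 x := fun hx t ht => by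
    rw [hHK t ht _ hx, hHK 0 (left_mem_Icc.2 zero_le_one) _ hx]
  have hdeg : gI (c 1) - gI (c 0) = gJ (c 1) - gJ (c 0) :=
    AddCircle.sub_eq_sub_of_homotopy γ hH (hKfix hk₁) (hKfix hk₂)
      (Γ₀ := ⟨fun s => gI (c s), by fun_prop⟩) (Γ₁ := ⟨fun s => gJ (c s), by fun_prop⟩)
      (fun s => by simp [hH₀, ← hcγ, hgI]) (fun s => by simp [hH₁, ← hcγ, hgJ])
  have hc₁ : (c 1 : 𝕋) = b := by rw [hcγ, γ.target, hfk₂]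
  refine hπI.lift_sub_ne_of_frontier_eq hπJ hgIc hgJc hgI hgJ
    (disjoint_connectedComponentIn_of_ne hIJ) hab hba hfr (hfk₁ ▸ hJK hk₁) (hfk₂ ▸ hJK hk₂) ?_
  have hI₁ := gI.map_sub_map_of_coe_eq hc₁
  have hJ₁ := gJ.map_sub_map_of_coe_eq hc₁
  rw [hc₀] at hdeg
  linarith

/-- **Retractions to distinct complementary arcs are non-homotopic rel `K`.**
Let `M` be path-connected, `K ⊆ M` nonempty compact, `f : M → ℝ/ℤ` continuous, and let
`I ≠ J` be connected components of `(ℝ/ℤ) ∖ f(K)`, where the frontier of `I` consists of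
two distinct points `p, q` attained by `f` on `K`. Then there is no homotopy from
`π_I ∘ f` to `π_J ∘ f` that sends `K` to `0` at all times. -/
theorem arcRetractions_not_homotopic_rel
    {M : Type*} [TopologicalSpace M] [PathConnectedSpace M]
    (K : Set M) (hKne : K.Nonempty) (hKc : IsCompact K)
    (f : M → AddCircle (1:ℝ)) (hf : Continuous f)
    (I J : Set (AddCircle (1:ℝ)))
    (hI : ∃ z ∈ (f '' K)ᶜ, I = connectedComponentIn (f '' K)ᶜ z)
    (hJ : ∃ z ∈ (f '' K)ᶜ, J = connectedComponentIn (f '' K)ᶜ z)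
    (hIJ : I ≠ J)
    (p q : AddCircle (1:ℝ)) (hpq : p ≠ q) (hfr : frontier I = {p, q})
    (k₁ k₂ : M) (hk₁ : k₁ ∈ K) (hk₂ : k₂ ∈ K) (hfk₁ : f k₁ = p) (hfk₂ : f k₂ = q)
    (πI πJ : AddCircle (1:ℝ) → AddCircle (1:ℝ))
    (hπI : IsArcRetraction I πI) (hπJ : IsArcRetraction J πJ) :
    ¬ ∃ H : ℝ → M → AddCircle (1:ℝ),
        ContinuousOn (fun z : ℝ × M => H z.1 z.2) (Set.Icc (0:ℝ) 1 ×ˢ Set.univ) ∧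
        (∀ x : M, H 0 x = πI (f x)) ∧ (∀ x : M, H 1 x = πJ (f x)) ∧
        ∀ t ∈ Set.Icc (0:ℝ) 1, ∀ x ∈ K, H t x = 0 :=
  arcRetractions_not_homotopic_rel_general K f hf I J hI hJ hIJ p q hpq hfr k₁ k₂ hk₁ hk₂ hfk₁ hfk₂
    πI πJ hπI hπJ
end

section
/- Let T² = ℝ²/ℤ² and let a, b ∈ ℝ have irrational slope: q·a ≠ p·b for every (p,q) ∈ ℤ² ∖ {(0,0)}. Let λ : T² → [0,1] be continuous with λ⁻¹({0}) = {p₀} a single point, and let φ be a continuous flow on T² generated by the vector field (a,b)·λ, in the sense that φ admits a lift φ̂ to ℝ² such that t ↦ φ̂_t(z) is differentiable with derivative (a,b)·λ(proj(φ̂_t(z))) for every z ∈ ℝ². Then for every d ∈ ℤ² with d ≠ (0,0) there exists ε ∈ (0, 1/2) such that no ε-chain on T² starting and ending at p₀ has homology class [γ] = d. Equivalently, the set of α-relative asymptotic pseudo-directions D_{φ,α} ⊆ H₁(T², {p₀}; ℤ) ≅ ℤ² equals {0}, for α the class of the first coordinate. -/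
/-!
The lifted flow moves points only in the direction `(a, b)`, at speed `λ`. Along the lift of an
`ε`-chain the transverse coordinate `across a b z = b z₁ - a z₂` therefore changes by `O(ε)` per
step, while `along a b z = a z₁ + b z₂` drops by at most `O(ε)` per step and grows by a definite
amount in every step that starts away from the lifts of `p₀`, where `λ` is bounded below.
Translating so that `p₀` lifts to the origin, these lifts form the lattice `ℤ²`.

Cut the lifted chain at its returns near `ℤ²`. Between consecutive returns the lattice
displacement `k` has `|across k|` at most `O(ε)` per step and `along k` growing linearly in the
number of steps. If `along k ≤ |along d|` the segment is therefore short and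
`|across k|` is smaller than the least value of `|across|` on the finitely many nonzero lattice
points with `|along| ≤ |along d| + 1`, a value that is positive because the slope is irrational;
so `k = 0`. Hence every return lies at `0` or at a lattice point `k` with `along k > |along d|`,
which is impossible for the final return `d ≠ 0`.
-/

open Filter Topology

abbrev Torus2 : Type := AddCircle (1:ℝ) × AddCircle (1:ℝ)

noncomputable def torusProj (z : ℝ × ℝ) : Torus2 :=
  ((z.1 : AddCircle (1:ℝ)), (z.2 : AddCircle (1:ℝ)))

def along (a b : ℝ) : ℝ × ℝ →ₗ[ℝ] ℝ := a • LinearMap.fst ℝ ℝ ℝ + b • LinearMap.snd ℝ ℝ ℝ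

def across (a b : ℝ) : ℝ × ℝ →ₗ[ℝ] ℝ := b • LinearMap.fst ℝ ℝ ℝ - a • LinearMap.snd ℝ ℝ ℝ

@[simp] lemma along_apply (a b : ℝ) (z : ℝ × ℝ) : along a b z = a * z.1 + b * z.2 := rfl

@[simp] lemma across_apply (a b : ℝ) (z : ℝ × ℝ) : across a b z = b * z.1 - a * z.2 := rfl

lemma abs_along_le (a b : ℝ) (z : ℝ × ℝ) : |along a b z| ≤ (|a| + |b|) * ‖z‖ := by
  have h₁ : |z.1| ≤ ‖z‖ := norm_fst_le z
  have h₂ : |z.2| ≤ ‖z‖ := norm_snd_le z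
  calc |along a b z| ≤ |a| * |z.1| + |b| * |z.2| := by
        simpa only [along_apply, abs_mul] using abs_add_le (a * z.1) (b * z.2)
    _ ≤ (|a| + |b|) * ‖z‖ := by nlinarith [abs_nonneg a, abs_nonneg b]

lemma abs_across_le (a b : ℝ) (z : ℝ × ℝ) : |across a b z| ≤ (|a| + |b|) * ‖z‖ := by
  have h₁ : |z.1| ≤ ‖z‖ := norm_fst_le z
  have h₂ : |z.2| ≤ ‖z‖ := norm_snd_le z
  calc |across a b z| ≤ |b| * |z.1| + |a| * |z.2| := by
        simpa only [across_apply, abs_mul] using abs_sub (b * z.1) (a * z.2)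
    _ ≤ (|a| + |b|) * ‖z‖ := by nlinarith [abs_nonneg a, abs_nonneg b]

def latticeEmb : ℤ × ℤ →+ ℝ × ℝ := (Int.castAddHom ℝ).prodMap (Int.castAddHom ℝ)

@[simp] lemma latticeEmb_apply (k : ℤ × ℤ) : latticeEmb k = ((k.1 : ℝ), (k.2 : ℝ)) := rfl

noncomputable def latticeRound (z : ℝ × ℝ) : ℤ × ℤ := (round z.1, round z.2)

@[simp] lemma latticeRound_latticeEmb (k : ℤ × ℤ) : latticeRound (latticeEmb k) = k := by
  simp [latticeRound]

noncomputable def latticeOffset (z : ℝ × ℝ) : ℝ × ℝ := z - latticeEmb (latticeRound z)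

lemma dist_torusProj (z z' : ℝ × ℝ) :
    dist (torusProj z) (torusProj z') = ‖latticeOffset (z - z')‖ := by
  simp only [torusProj, dist_eq_norm, ← AddCircle.coe_sub, UnitAddCircle.norm_eq,
    Prod.norm_def, latticeOffset, latticeRound, latticeEmb_apply, Prod.fst_sub, Prod.snd_sub,
    Real.norm_eq_abs]

lemma dist_torusProj_le (z z' : ℝ × ℝ) : dist (torusProj z) (torusProj z') ≤ ‖z - z'‖ := by
  rw [dist_torusProj, latticeOffset, Prod.norm_def, Prod.norm_def]
  exact max_le_max (by simpa [latticeRound] using round_le (z - z').1 0)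
    (by simpa [latticeRound] using round_le (z - z').2 0)

lemma continuous_torusProj : Continuous torusProj :=
  (continuous_quotient_mk'.comp continuous_fst).prodMk (continuous_quotient_mk'.comp continuous_snd)

lemma along_sq_add_across_sq (a b : ℝ) (z : ℝ × ℝ) :
    along a b z ^ 2 + across a b z ^ 2 = (a ^ 2 + b ^ 2) * (z.1 ^ 2 + z.2 ^ 2) := by
  simp only [along_apply, across_apply]; ring

lemma mem_Icc_of_sq_le_ceil {m : ℤ} {C : ℝ} (h : (m : ℝ) ^ 2 ≤ C) : m ∈ Set.Icc (-⌈C⌉) ⌈C⌉ := by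
  have hm : m ^ 2 ≤ ⌈C⌉ := Int.le_ceil_iff.mpr (by push_cast; linarith)
  exact abs_le.mp ((Int.abs_eq_natAbs m ▸ Int.natAbs_le_self_sq m).trans hm)

lemma exists_pos_le_abs_across {a b : ℝ}
    (hirr : ∀ p q : ℤ, (p, q) ≠ ((0 : ℤ), (0 : ℤ)) → (q : ℝ) * a ≠ (p : ℝ) * b) (M : ℝ) :
    ∃ η, 0 < η ∧ η ≤ 1 ∧ ∀ k : ℤ × ℤ, k ≠ 0 → |along a b (latticeEmb k)| ≤ M →
      η ≤ |across a b (latticeEmb k)| := by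
  have ha : a ≠ 0 := by simpa using hirr 0 1 (by simp)
  set A := {k : ℤ × ℤ | k ≠ 0 ∧ |along a b (latticeEmb k)| ≤ M ∧ |across a b (latticeEmb k)| ≤ 1}
  have hS : 0 < a ^ 2 + b ^ 2 := by positivity
  have hA : A.Finite := by
    set N := ⌈(M ^ 2 + 1) / (a ^ 2 + b ^ 2)⌉
    refine ((Set.finite_Icc (-N) N).prod (Set.finite_Icc (-N) N)).subset fun k ⟨_, hM, h1⟩ ↦ ?_
    have hnorm : along a b (latticeEmb k) ^ 2 + across a b (latticeEmb k) ^ 2 =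
        (a ^ 2 + b ^ 2) * ((k.1 : ℝ) ^ 2 + (k.2 : ℝ) ^ 2) :=
      along_sq_add_across_sq a b (latticeEmb k)
    have h₁ := pow_le_pow_left₀ (abs_nonneg _) hM 2
    have h₂ := pow_le_pow_left₀ (abs_nonneg _) h1 2
    rw [sq_abs] at h₁ h₂
    rw [one_pow] at h₂
    have hsq : (k.1 : ℝ) ^ 2 + (k.2 : ℝ) ^ 2 ≤ (M ^ 2 + 1) / (a ^ 2 + b ^ 2) := by
      rw [le_div_iff₀ hS]
      linarith
    exact ⟨mem_Icc_of_sq_le_ceil (by nlinarith [sq_nonneg (k.2 : ℝ)]),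
      mem_Icc_of_sq_le_ceil (by nlinarith [sq_nonneg (k.1 : ℝ)])⟩
  have hpos : ∀ k ∈ A, 0 < |across a b (latticeEmb k)| := fun k hk ↦ by
    simpa [sub_eq_zero, mul_comm] using (hirr k.1 k.2 hk.1).symm
  have hev : ∀ᶠ η in 𝓝[>] (0 : ℝ), 0 < η ∧ η ≤ 1 ∧ ∀ k ∈ A, η ≤ |across a b (latticeEmb k)| :=
    eventually_mem_nhdsWithin.and <| nhdsWithin_le_nhds <| (eventually_le_nhds one_pos).and <|
      (eventually_all_finite hA).2 fun k hk ↦ eventually_le_nhds (hpos k hk)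
  obtain ⟨η, hη0, hη1, hηA⟩ := hev.exists
  refine ⟨η, hη0, hη1, fun k hk hkM ↦ ?_⟩
  by_cases hk1 : |across a b (latticeEmb k)| ≤ 1
  · exact hηA k ⟨hk, hkM, hk1⟩
  · linarith

lemma abs_lt_of_drift_bounds {A H F K V ρ η M : ℝ} (hK : 0 ≤ K) (hV : 0 < V) (hM : 0 ≤ M)
    (hη : η ≤ 1) (hρ : 2 * ρ ≤ η) (hKV : 2 * K * (2 * M + 2 + V) < η * V) (hF : 0 ≤ F)
    (hH : |H| ≤ (F + 1) * K + ρ) (hA : F * V - ((F + 1) * K + ρ) ≤ A) (hAM : A ≤ M) :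
    |H| < η ∧ |A| ≤ M + 1 := by
  -- `A ≤ M` bounds the number `F` of fast steps, hence the accumulated error `(F + 1) K`.
  have hKη : 2 * K < η := by nlinarith
  have hKV4 : 4 * K ≤ V := by nlinarith
  have hFV : F * V ≤ 2 * (M + 1) := by nlinarith
  have hFK : (F + 1) * K < η / 2 := by nlinarith
  have hE : (F + 1) * K + ρ < η := by linarith
  refine ⟨hH.trans_lt hE, abs_le.mpr ⟨?_, by linarith⟩⟩
  nlinarith

lemma eq_zero_or_lt_along_of_drift_bounds {a b F K V ρ η M : ℝ} {k : ℤ × ℤ}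
    (hgap : ∀ k : ℤ × ℤ, k ≠ 0 → |along a b (latticeEmb k)| ≤ M + 1 →
      η ≤ |across a b (latticeEmb k)|)
    (hK : 0 ≤ K) (hV : 0 < V) (hM : 0 ≤ M) (hη : η ≤ 1) (hρ : 2 * ρ ≤ η)
    (hKV : 2 * K * (2 * M + 2 + V) < η * V) (hF : 0 ≤ F)
    (hH : |across a b (latticeEmb k)| ≤ (F + 1) * K + ρ)
    (hA : F * V - ((F + 1) * K + ρ) ≤ along a b (latticeEmb k)) :
    k = 0 ∨ M < along a b (latticeEmb k) := by
  by_contra! h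
  obtain ⟨hk, hAM⟩ := h
  obtain ⟨hHη, hAM1⟩ := abs_lt_of_drift_bounds hK hV hM hη hρ hKV hF hH hA hAM
  exact (hgap k hk hAM1).not_gt hHη

/-- Abstracts the lift `y` of an `ε`-chain, translated so that the lifts of `p₀` form `ℤ²`;
`c j` stands for the time integral of `λ` along the `j`-th flow segment. -/
structure IsDriftChain (a b ε ν r : ℝ) (n : ℕ) (y : ℕ → ℝ × ℝ) (c : ℕ → ℝ) : Prop where
  norm_sub_lt : ∀ j < n, ‖y (j + 1) - y j - c j • (a, b)‖ < ε
  nonneg : ∀ j < n, 0 ≤ c j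
  le_of_le_norm_latticeOffset : ∀ j < n, r ≤ ‖latticeOffset (y j)‖ → ν ≤ c j

lemma drift_step_bounds {a b ε c : ℝ} {y y' : ℝ × ℝ} (h : ‖y' - y - c • (a, b)‖ < ε) :
    |across a b (y' - y)| ≤ (|a| + |b|) * ε ∧
      c * (a ^ 2 + b ^ 2) - (|a| + |b|) * ε ≤ along a b (y' - y) := by
  set v := y' - y - c • (a, b)
  have hy : y' - y = c • (a, b) + v := by simp [v]
  have hv₁ := (abs_across_le a b v).trans (mul_le_mul_of_nonneg_left h.le (by positivity))
  have hv₂ := (abs_along_le a b v).trans (mul_le_mul_of_nonneg_left h.le (by positivity))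
  have hacross : across a b (a, b) = 0 := by simp [mul_comm]
  have halong : along a b (a, b) = a ^ 2 + b ^ 2 := by simp [sq]
  rw [hy, map_add, map_add, map_smul, map_smul, hacross, halong, smul_zero, zero_add, smul_eq_mul]
  exact ⟨hv₁, by linarith [neg_abs_le (along a b v)]⟩

namespace IsDriftChain

variable {a b ε ν r : ℝ} {n : ℕ} {y : ℕ → ℝ × ℝ} {c : ℕ → ℝ}

lemma segment_bounds (hc : IsDriftChain a b ε ν r n y c) {p m : ℕ} (hpm : p + m + 1 ≤ n)
    (hfar : ∀ i, 0 < i → i ≤ m → r ≤ ‖latticeOffset (y (p + i))‖) :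
    |across a b (y (p + m + 1) - y p)| ≤ (m + 1) * ((|a| + |b|) * ε) ∧
      m * (ν * (a ^ 2 + b ^ 2)) - (m + 1) * ((|a| + |b|) * ε) ≤
        along a b (y (p + m + 1) - y p) := by
  induction m with
  | zero =>
    obtain ⟨hH, hA⟩ := drift_step_bounds (hc.norm_sub_lt p (by omega))
    have := mul_nonneg (hc.nonneg p (by omega)) (by positivity : (0 : ℝ) ≤ a ^ 2 + b ^ 2)
    simp only [Nat.cast_zero, zero_add, zero_mul, one_mul]
    exact ⟨hH, by linarith⟩
  | succ m ih =>
    obtain ⟨ihH, ihA⟩ := ih (by omega) fun i hi him ↦ hfar i hi (by omega)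
    have hj : p + m + 1 < n := by omega
    obtain ⟨hH, hA⟩ := drift_step_bounds (hc.norm_sub_lt _ hj)
    have hν := hc.le_of_le_norm_latticeOffset _ hj (hfar (m + 1) (by omega) le_rfl)
    have hνS := mul_le_mul_of_nonneg_right hν (by positivity : (0 : ℝ) ≤ a ^ 2 + b ^ 2)
    have hsplit : y (p + (m + 1) + 1) - y p =
        (y (p + m + 1 + 1) - y (p + m + 1)) + (y (p + m + 1) - y p) := by
      rw [← add_assoc]; abel
    rw [hsplit, map_add, map_add]
    push_cast
    constructor
    · linarith [abs_add_le (across a b (y (p + m + 1 + 1) - y (p + m + 1)))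
        (across a b (y (p + m + 1) - y p))]
    · linarith

lemma latticeRound_sub_bounds (hc : IsDriftChain a b ε ν r n y c) {p m : ℕ} (hpm : p + m + 1 ≤ n)
    (hp : ‖latticeOffset (y p)‖ < r) (hq : ‖latticeOffset (y (p + m + 1))‖ < r)
    (hfar : ∀ i, 0 < i → i ≤ m → r ≤ ‖latticeOffset (y (p + i))‖) :
    |across a b (latticeEmb (latticeRound (y (p + m + 1)) - latticeRound (y p)))| ≤
        (m + 1) * ((|a| + |b|) * ε) + 2 * ((|a| + |b|) * r) ∧
      m * (ν * (a ^ 2 + b ^ 2)) - ((m + 1) * ((|a| + |b|) * ε) + 2 * ((|a| + |b|) * r)) ≤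
        along a b (latticeEmb (latticeRound (y (p + m + 1)) - latticeRound (y p))) := by
  obtain ⟨hH, hA⟩ := hc.segment_bounds hpm hfar
  have hk : latticeEmb (latticeRound (y (p + m + 1)) - latticeRound (y p)) =
      (y (p + m + 1) - y p) - latticeOffset (y (p + m + 1)) + latticeOffset (y p) := by
    simp only [latticeOffset, map_sub]; abel
  have hs : 0 ≤ |a| + |b| := by positivity
  have hAp := (abs_along_le a b _).trans (mul_le_mul_of_nonneg_left hp.le hs)
  have hAq := (abs_along_le a b _).trans (mul_le_mul_of_nonneg_left hq.le hs)
  have hHp := (abs_across_le a b _).trans (mul_le_mul_of_nonneg_left hp.le hs)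
  have hHq := (abs_across_le a b _).trans (mul_le_mul_of_nonneg_left hq.le hs)
  rw [hk]
  generalize y (p + m + 1) - y p = u at hH hA
  simp only [map_add, map_sub]
  constructor
  · have := abs_add_le (across a b u - across a b (latticeOffset (y (p + m + 1))))
      (across a b (latticeOffset (y p)))
    have := abs_sub (across a b u) (across a b (latticeOffset (y (p + m + 1))))
    linarith
  · linarith [le_abs_self (along a b (latticeOffset (y (p + m + 1)))),
      neg_abs_le (along a b (latticeOffset (y p)))]

lemma latticeRound_eq_zero_or_lt_along {M η : ℝ} (hc : IsDriftChain a b ε ν r n y c)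
    (hy : y 0 = 0)
    (hgap : ∀ k : ℤ × ℤ, k ≠ 0 → |along a b (latticeEmb k)| ≤ M + 1 →
      η ≤ |across a b (latticeEmb k)|)
    (hη : η ≤ 1) (hM : 0 ≤ M) (hε : 0 ≤ ε) (hV : 0 < ν * (a ^ 2 + b ^ 2))
    (hrη : 4 * ((|a| + |b|) * r) ≤ η)
    (hKV : 2 * ((|a| + |b|) * ε) * (2 * M + 2 + ν * (a ^ 2 + b ^ 2)) < η * (ν * (a ^ 2 + b ^ 2)))
    (q : ℕ) (hqn : q ≤ n) (hq : ‖latticeOffset (y q)‖ < r) :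
    latticeRound (y q) = 0 ∨ M < along a b (latticeEmb (latticeRound (y q))) := by
  classical
  induction q using Nat.strong_induction_on with
  | _ q ih =>
  rcases Nat.eq_zero_or_pos q with rfl | hq0
  · simp [hy, latticeRound]
  have hr : 0 < r := (norm_nonneg _).trans_lt hq
  set near : ℕ → Prop := fun j ↦ ‖latticeOffset (y j)‖ < r
  have hnear0 : near 0 := by simpa [near, hy, latticeOffset, latticeRound] using hr
  obtain ⟨p, hp, hpq, hbetween⟩ : ∃ p, near p ∧ p < q ∧ ∀ j, p < j → j < q → ¬ near j :=
    ⟨Nat.findGreatest near (q - 1), Nat.findGreatest_spec (Nat.zero_le _) hnear0,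
      by have := Nat.findGreatest_le (P := near) (q - 1); omega,
      fun j hpj hjq ↦ Nat.findGreatest_is_greatest hpj (by omega)⟩
  obtain ⟨m, rfl⟩ := Nat.exists_eq_add_of_lt hpq
  have hfar : ∀ i, 0 < i → i ≤ m → r ≤ ‖latticeOffset (y (p + i))‖ := fun i hi him ↦
    not_lt.mp (hbetween (p + i) (by omega) (by omega))
  obtain ⟨hH, hA⟩ := hc.latticeRound_sub_bounds hqn hp hq hfar
  have hstep := eq_zero_or_lt_along_of_drift_bounds hgap (by positivity) hV hM hη (by linarith)
    hKV (Nat.cast_nonneg m) hH hA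
  generalize hk : latticeRound (y (p + m + 1)) - latticeRound (y p) = k at hstep
  rw [show latticeRound (y (p + m + 1)) = latticeRound (y p) + k by rw [← hk]; abel,
    map_add, map_add]
  rcases ih p (by omega) (by omega) hp with hp0 | hpM <;> rcases hstep with hk0 | hkM
  · left; rw [hp0, hk0, add_zero]
  · right; rw [hp0, map_zero, map_zero, zero_add]; exact hkM
  · right; rw [hk0, map_zero, map_zero, add_zero]; exact hpM
  · right; linarith

end IsDriftChain

lemma eq_add_integral_smul_of_hasDerivAt {E : Type*} [NormedAddCommGroup E] [NormedSpace ℝ E]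
    [CompleteSpace E] {f : ℝ → E} {g : ℝ → ℝ} {w : E} (hg : Continuous g)
    (hf : ∀ t, HasDerivAt f (g t • w) t) (t : ℝ) : f t = f 0 + (∫ s in (0 : ℝ)..t, g s) • w := by
  rw [← intervalIntegral.integral_smul_const,
    intervalIntegral.integral_eq_sub_of_hasDerivAt (fun s _ ↦ hf s)
      ((hg.smul continuous_const).intervalIntegrable _ _)]
  abel

lemma exists_pos_le_of_le_dist {X : Type*} [MetricSpace X] [CompactSpace X] {f : X → ℝ}
    (hf : Continuous f) {x₀ : X} (hpos : ∀ x, x ≠ x₀ → 0 < f x) {R : ℝ} (hR : 0 < R) :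
    ∃ μ, 0 < μ ∧ ∀ x, R ≤ dist x x₀ → μ ≤ f x :=
  (isClosed_le continuous_const (continuous_id.dist continuous_const)).isCompact.exists_forall_le'
    hf.continuousOn fun x hx ↦ hpos x fun h ↦ by subst h; simp at hx; linarith

section LiftedFlow

variable {lam : Torus2 → ℝ} {φh : ℝ → ℝ × ℝ → ℝ × ℝ} {w : ℝ × ℝ}

lemma continuous_lam_orbit (hlamc : Continuous lam)
    (hderiv : ∀ z t, HasDerivAt (fun s ↦ φh s z) (lam (torusProj (φh t z)) • w) t) (z : ℝ × ℝ) :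
    Continuous fun s ↦ lam (torusProj (φh s z)) :=
  hlamc.comp <| continuous_torusProj.comp <|
    continuous_iff_continuousAt.2 fun t ↦ (hderiv z t).continuousAt

lemma lifted_flow_eq_add_integral_smul (hlamc : Continuous lam) (hφh0 : ∀ z, φh 0 z = z)
    (hderiv : ∀ z t, HasDerivAt (fun s ↦ φh s z) (lam (torusProj (φh t z)) • w) t)
    (z : ℝ × ℝ) (t : ℝ) :
    φh t z = z + (∫ s in (0 : ℝ)..t, lam (torusProj (φh s z))) • w := by
  rw [eq_add_integral_smul_of_hasDerivAt (continuous_lam_orbit hlamc hderiv z) (hderiv z) t, hφh0]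

lemma min_le_integral_of_le_dist (hlamc : Continuous lam) (hlam : ∀ x, 0 ≤ lam x)
    {p₀ : Torus2} {R μ : ℝ} (hμ : ∀ x, R ≤ dist x p₀ → μ ≤ lam x) (hφh0 : ∀ z, φh 0 z = z)
    (hw : w ≠ 0) (hderiv : ∀ z t, HasDerivAt (fun s ↦ φh s z) (lam (torusProj (φh t z)) • w) t)
    {z : ℝ × ℝ} {t : ℝ} (ht : 1 ≤ t) (hz : 2 * R ≤ dist (torusProj z) p₀) :
    min μ (R / ‖w‖) ≤ ∫ s in (0 : ℝ)..t, lam (torusProj (φh s z)) := by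
  have hg := continuous_lam_orbit hlamc hderiv z
  by_contra! h
  have hslow : ∀ s ∈ Set.Icc 0 t, μ ≤ lam (torusProj (φh s z)) := by
    intro s hs
    have hIs := intervalIntegral.integral_mono_interval (μ := MeasureTheory.volume) le_rfl hs.1 hs.2
      (Eventually.of_forall fun u ↦ hlam _) (hg.intervalIntegrable 0 t)
    have hIs0 : 0 ≤ ∫ u in (0 : ℝ)..s, lam (torusProj (φh u z)) :=
      intervalIntegral.integral_nonneg hs.1 fun u _ ↦ hlam _
    have hmove : dist (torusProj (φh s z)) (torusProj z) < R :=
      calc dist (torusProj (φh s z)) (torusProj z) ≤ ‖φh s z - z‖ := dist_torusProj_le _ _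
        _ = (∫ u in (0 : ℝ)..s, lam (torusProj (φh u z))) * ‖w‖ := by
          rw [lifted_flow_eq_add_integral_smul hlamc hφh0 hderiv z s, add_sub_cancel_left,
            norm_smul, Real.norm_of_nonneg hIs0]
        _ < R := (lt_div_iff₀ (norm_pos_iff.2 hw)).1 (hIs.trans_lt (h.trans_le (min_le_right _ _)))
    apply hμ
    linarith [dist_triangle (torusProj z) (torusProj (φh s z)) p₀,
      dist_comm (torusProj z) (torusProj (φh s z))]
  have hlow : t * μ ≤ ∫ s in (0 : ℝ)..t, lam (torusProj (φh s z)) := by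
    simpa using intervalIntegral.integral_mono_on (by linarith)
      (intervalIntegrable_const (μ := MeasureTheory.volume)) (hg.intervalIntegrable 0 t) hslow
  have hI0 : 0 ≤ ∫ u in (0 : ℝ)..t, lam (torusProj (φh u z)) :=
    intervalIntegral.integral_nonneg (by linarith) fun u _ ↦ hlam _
  have hμI := h.trans_le (min_le_left μ (R / ‖w‖))
  nlinarith

end LiftedFlow

lemma exists_pos_lt_half_and_mul_lt (C : ℝ) {D : ℝ} (hD : 0 < D) :
    ∃ ε : ℝ, 0 < ε ∧ ε < 1 / 2 ∧ C * ε < D :=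
  Eventually.exists (f := 𝓝[>] 0) <| eventually_mem_nhdsWithin.and <| nhdsWithin_le_nhds <|
    (eventually_lt_nhds one_half_pos).and <|
      ((continuous_const_mul C).tendsto' 0 0 (mul_zero C)).eventually (eventually_lt_nhds hD)

lemma isDriftChain_of_lift {a b ε μ R : ℝ} {lam : Torus2 → ℝ} {φh : ℝ → ℝ × ℝ → ℝ × ℝ}
    {p₀ : Torus2} (hab : ((a, b) : ℝ × ℝ) ≠ 0) (hlamc : Continuous lam) (hlam : ∀ x, 0 ≤ lam x)
    (hμ : ∀ x, R ≤ dist x p₀ → μ ≤ lam x) (hφh0 : ∀ z, φh 0 z = z)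
    (hderiv : ∀ z t, HasDerivAt (fun s ↦ φh s z) (lam (torusProj (φh t z)) • (a, b)) t)
    {n : ℕ} {xh : ℕ → ℝ × ℝ} {τ : ℕ → ℝ} (hp₀ : torusProj (xh 0) = p₀)
    (hτ : ∀ i < n, 1 ≤ τ i) (hjump : ∀ i < n, ‖xh (i + 1) - φh (τ i) (xh i)‖ < ε) :
    IsDriftChain a b ε (min μ (R / ‖((a, b) : ℝ × ℝ)‖)) (2 * R) n (fun j ↦ xh j - xh 0)
      (fun j ↦ ∫ s in (0 : ℝ)..τ j, lam (torusProj (φh s (xh j)))) where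
  norm_sub_lt j hj := by
    convert hjump j hj using 2
    rw [lifted_flow_eq_add_integral_smul hlamc hφh0 hderiv]
    abel
  nonneg j hj := intervalIntegral.integral_nonneg (by linarith [hτ j hj]) fun u _ ↦ hlam _
  le_of_le_norm_latticeOffset j hj hfar := min_le_integral_of_le_dist hlamc hlam hμ hφh0 hab
    hderiv (hτ j hj) (by rwa [← hp₀, dist_torusProj])

theorem no_nonzero_relative_direction_general
    (a b : ℝ)
    (hirr : ∀ p q : ℤ, (p, q) ≠ ((0 : ℤ), (0 : ℤ)) → (q : ℝ) * a ≠ (p : ℝ) * b)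
    (lam : Torus2 → ℝ) (hlamc : Continuous lam)
    (hlam01 : ∀ z : Torus2, lam z ∈ Set.Icc (0:ℝ) 1)
    (p₀ : Torus2) (hlam0 : lam ⁻¹' {0} = {p₀})
    (φ : ℝ → Torus2 → Torus2)
    (φh : ℝ → ℝ × ℝ → ℝ × ℝ)
    (hφh0 : ∀ z : ℝ × ℝ, φh 0 z = z)
    (hderiv : ∀ (z : ℝ × ℝ) (t : ℝ),
      HasDerivAt (fun s : ℝ => φh s z) (lam (torusProj (φh t z)) • (a, b)) t) :
    ∀ d : ℤ × ℤ, d ≠ ((0 : ℤ), (0 : ℤ)) → ∃ ε : ℝ, 0 < ε ∧ ε < 1/2 ∧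
      ¬ ∃ (n : ℕ) (x : ℕ → Torus2) (xh : ℕ → ℝ × ℝ) (τ : ℕ → ℝ),
          1 ≤ n ∧ x 0 = p₀ ∧ x n = p₀ ∧
          (∀ i < n, 1 ≤ τ i) ∧
          (∀ i < n, dist (φ (τ i) (x i)) (x (i + 1)) < ε) ∧
          (∀ i ≤ n, torusProj (xh i) = x i) ∧
          (∀ i < n, ‖xh (i + 1) - φh (τ i) (xh i)‖ < ε) ∧
          xh n - xh 0 = (((d.1 : ℝ), (d.2 : ℝ)) : ℝ × ℝ) := by
  have ha : a ≠ 0 := by simpa using hirr 0 1 (by simp)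
  have hab : ((a, b) : ℝ × ℝ) ≠ 0 := fun h ↦ ha (congrArg Prod.fst h)
  have hlam_pos : ∀ x, x ≠ p₀ → 0 < lam x := fun x hx ↦
    (hlam01 x).1.lt_of_ne' fun h ↦ hx (hlam0.subset h)
  intro d hd
  set M := |along a b (latticeEmb d)|
  obtain ⟨η, hη0, hη1, hgap⟩ := exists_pos_le_abs_across hirr (M + 1)
  set R := η / (8 * (|a| + |b|))
  obtain ⟨μ, hμ0, hμ⟩ := exists_pos_le_of_le_dist hlamc hlam_pos (by positivity : 0 < R)
  set V := min μ (R / ‖((a, b) : ℝ × ℝ)‖) * (a ^ 2 + b ^ 2)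
  have hV : 0 < V := mul_pos (lt_min hμ0 (by positivity)) (by positivity)
  obtain ⟨ε, hε0, hε1, hεV⟩ :=
    exists_pos_lt_half_and_mul_lt (2 * (|a| + |b|) * (2 * M + 2 + V)) (mul_pos hη0 hV)
  refine ⟨ε, hε0, hε1, ?_⟩
  rintro ⟨n, x, xh, τ, -, hx0, -, hτ, -, hlift, hjump, hhom⟩
  have hchain := isDriftChain_of_lift hab hlamc (fun x ↦ (hlam01 x).1) hμ hφh0 hderiv
    ((hlift 0 (Nat.zero_le n)).trans hx0) hτ hjump
  have hR : 4 * ((|a| + |b|) * (2 * R)) ≤ η := by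
    simp only [R]; field_simp; norm_num
  have hyn : xh n - xh 0 = latticeEmb d := hhom
  have hoff : ‖latticeOffset (xh n - xh 0)‖ < 2 * R := by
    rw [hyn, latticeOffset, latticeRound_latticeEmb, sub_self, norm_zero]
    positivity
  rcases hchain.latticeRound_eq_zero_or_lt_along (by simp) hgap hη1 (abs_nonneg _) hε0.le hV hR
    (by linarith) n le_rfl hoff with h | h <;> rw [hyn, latticeRound_latticeEmb] at h
  · exact hd h
  · exact (le_abs_self _).not_gt h

/-- **Slowed irrational flows have no nontrivial relative asymptotic pseudo-directions.**
Let `(a,b)` have irrational slope, let `λ : T² → [0,1]` be continuous and vanish exactly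
at `p₀`, and let `φ` be a continuous flow on `T²` generated by the vector field `(a,b)·λ`
(via a lifted flow `φ̂` on `ℝ²`). Then for every nonzero `d ∈ ℤ²` there is
`ε ∈ (0, 1/2)` such that no `ε`-chain from `p₀` to itself has homology class `d`
(the homology class being computed by lifting the chain to `ℝ²`). -/
theorem no_nonzero_relative_direction
    (a b : ℝ)
    (hirr : ∀ p q : ℤ, (p, q) ≠ ((0 : ℤ), (0 : ℤ)) → (q : ℝ) * a ≠ (p : ℝ) * b)
    (lam : Torus2 → ℝ) (hlamc : Continuous lam)
    (hlam01 : ∀ z : Torus2, lam z ∈ Set.Icc (0:ℝ) 1)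
    (p₀ : Torus2) (hlam0 : lam ⁻¹' {0} = {p₀})
    (φ : ℝ → Torus2 → Torus2)
    (hφc : Continuous fun p : ℝ × Torus2 => φ p.1 p.2)
    (hφ0 : ∀ x : Torus2, φ 0 x = x)
    (hφadd : ∀ (s t : ℝ) (x : Torus2), φ (s + t) x = φ s (φ t x))
    (φh : ℝ → ℝ × ℝ → ℝ × ℝ)
    (hφhc : Continuous fun p : ℝ × (ℝ × ℝ) => φh p.1 p.2)
    (hφh0 : ∀ z : ℝ × ℝ, φh 0 z = z)
    (hφhadd : ∀ (s t : ℝ) (z : ℝ × ℝ), φh (s + t) z = φh s (φh t z))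
    (hproj : ∀ (t : ℝ) (z : ℝ × ℝ), torusProj (φh t z) = φ t (torusProj z))
    (hderiv : ∀ (z : ℝ × ℝ) (t : ℝ),
      HasDerivAt (fun s : ℝ => φh s z) (lam (torusProj (φh t z)) • (a, b)) t) :
    ∀ d : ℤ × ℤ, d ≠ ((0 : ℤ), (0 : ℤ)) → ∃ ε : ℝ, 0 < ε ∧ ε < 1/2 ∧
      ¬ ∃ (n : ℕ) (x : ℕ → Torus2) (xh : ℕ → ℝ × ℝ) (τ : ℕ → ℝ),
          1 ≤ n ∧ x 0 = p₀ ∧ x n = p₀ ∧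
          (∀ i < n, 1 ≤ τ i) ∧
          (∀ i < n, dist (φ (τ i) (x i)) (x (i + 1)) < ε) ∧
          (∀ i ≤ n, torusProj (xh i) = x i) ∧
          (∀ i < n, ‖xh (i + 1) - φh (τ i) (xh i)‖ < ε) ∧
          xh n - xh 0 = (((d.1 : ℝ), (d.2 : ℝ)) : ℝ × ℝ) :=
  no_nonzero_relative_direction_general a b hirr lam hlamc hlam01 p₀ hlam0 φ φh hφh0 hderiv
end
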